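/- arXiv:2404.16468 — 10 statements merged into one kernel-verified Lean document; each statement's English description precedes it below -/
import Mathlib

section
/- Let (d*, p*) be an optimal solution of the value-learning dual LP. Then d*(s) > 0 for every state s, and the policy defined by π*(a|s) = p*(s,a)/d*(s) is an optimal policy for the MDP, i.e. it maximizes the average reward ρ^π over all policies. -/
open Finset

section MDPDefs

variable {S A : Type*}

/-- A (stationary, stochastic) policy on finite state/action spaces. -/
def IsPolicy [Fintype A] (π : S → A → ℝ) : Prop :=
  (∀ s a, 0 ≤ π s a) ∧ ∀ s, ∑ a, π s a = 1

/-- `d` is the (discounted) state visitation density of the policy `π`: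
it satisfies `d(s) = (1-γ)ι(s) + γ Σ_{s',a'} d(s') π(a'|s') τ(s|s',a')`. -/
def IsVisit [Fintype S] [Fintype A] (ι : S → ℝ) (τ : S → A → S → ℝ) (γ : ℝ)
    (π : S → A → ℝ) (d : S → ℝ) : Prop :=
  ∀ s, d s = (1 - γ) * ι s + γ * ∑ s', ∑ a', d s' * π s' a' * τ s' a' s

/-- Feasibility for the value-learning dual LP. -/
def DualFeas [Fintype S] [Fintype A] (ι : S → ℝ) (τ : S → A → S → ℝ) (γ : ℝ)
    (d : S → ℝ) (p : S → A → ℝ) : Prop :=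
  (∀ s, ∑ a, p s a = d s) ∧
  (∀ s, d s = (1 - γ) * ι s + γ * ∑ s', ∑ a', p s' a' * τ s' a' s) ∧
  ∀ s a, 0 ≤ p s a

/-- The dual objective: the average reward under the state-action density `p`,
`Σ_{s,a} p(s,a) Σ_{s'} τ(s'|s,a) r(s,a,s')`. -/
def DualObj [Fintype S] [Fintype A] (τ : S → A → S → ℝ) (r : S → A → S → ℝ)
    (p : S → A → ℝ) : ℝ :=
  ∑ s, ∑ a, p s a * ∑ s', τ s a s' * r s a s'

/-- The standing MDP assumptions: `ι` is an everywhere-positive initial-state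
distribution, `τ(·|s,a)` are transition probabilities and `γ ∈ [0,1)`. -/
def IsMDP [Fintype S] [Fintype A] (ι : S → ℝ) (τ : S → A → S → ℝ) (γ : ℝ) : Prop :=
  (∀ s, 0 < ι s) ∧ (∑ s, ι s = 1) ∧
  (∀ s a s', 0 ≤ τ s a s') ∧ (∀ s a, ∑ s', τ s a s' = 1) ∧
  0 ≤ γ ∧ γ < 1

end MDPDefs

/-- an optimal solution `(d*, p*)` of the value-learning dual LP has
`d*(s) > 0` everywhere, and the derived policy `π*(a|s) = p*(s,a)/d*(s)` is an optimal
policy for the MDP (it maximizes the average reward over all policies). -/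
theorem vl_dual_gives_optimal_policy
    {S A : Type*} [Fintype S] [Fintype A] [Nonempty S] [Nonempty A]
    (ι : S → ℝ) (τ : S → A → S → ℝ) (γ : ℝ) (r : S → A → S → ℝ)
    (hMDP : IsMDP ι τ γ)
    (dStar : S → ℝ) (pStar : S → A → ℝ)
    (hFeas : DualFeas ι τ γ dStar pStar)
    (hOpt : ∀ (d : S → ℝ) (p : S → A → ℝ), DualFeas ι τ γ d p →
      DualObj τ r p ≤ DualObj τ r pStar) :
    (∀ s, 0 < dStar s) ∧
    IsPolicy (fun s a => pStar s a / dStar s) ∧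
    IsVisit ι τ γ (fun s a => pStar s a / dStar s) dStar ∧
    (∀ (π : S → A → ℝ) (d : S → ℝ), IsPolicy π → IsVisit ι τ γ π d →
      DualObj τ r (fun s a => d s * π s a) ≤ DualObj τ r pStar) := by
  obtain ⟨hι, hιsum, hτ0, hτ1, hγ0, hγ1⟩ := hMDP
  obtain ⟨hsum, hflow, hp0⟩ := hFeas
  have hd0 : ∀ s, 0 < dStar s := by
    intro s
    have h1 : 0 < (1 - γ) * ι s := mul_pos (by linarith) (hι s)
    have h2 : 0 ≤ γ * ∑ s', ∑ a', pStar s' a' * τ s' a' s := by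
      apply mul_nonneg hγ0
      apply Finset.sum_nonneg; intro s' _
      apply Finset.sum_nonneg; intro a' _
      exact mul_nonneg (hp0 s' a') (hτ0 s' a' s)
    rw [hflow s]; linarith
  refine ⟨hd0, ⟨?_, ?_⟩, ?_, ?_⟩
  · intro s a; exact div_nonneg (hp0 s a) (hd0 s).le
  · intro s
    rw [← Finset.sum_div, hsum s, div_self (hd0 s).ne']
  · intro s
    have key : ∀ s' ∈ Finset.univ (α := S), ∀ a' ∈ Finset.univ (α := A),
        dStar s' * (pStar s' a' / dStar s') * τ s' a' s
        = pStar s' a' * τ s' a' s := by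
      intro s' _ a' _
      rw [mul_div_cancel₀ _ (hd0 s').ne']
    calc dStar s = (1 - γ) * ι s + γ * ∑ s', ∑ a', pStar s' a' * τ s' a' s := hflow s
      _ = (1 - γ) * ι s + γ * ∑ s', ∑ a',
            dStar s' * (pStar s' a' / dStar s') * τ s' a' s := by
          congr 2
          exact (Finset.sum_congr rfl fun s' hs' =>
            Finset.sum_congr rfl fun a' ha' => (key s' hs' a' ha').symm)
  · intro π d hπ hvis
    obtain ⟨hπ0, hπ1⟩ := hπ
    -- nonnegativity of d via the negative-part argument
    set f : S → ℝ := fun s => max (-(d s)) 0 with hfdef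
    have hf0 : ∀ s, 0 ≤ f s := fun s => le_max_right _ _
    have hfle : ∀ s, f s ≤ γ * ∑ s', ∑ a', f s' * π s' a' * τ s' a' s := by
      intro s
      have hR : 0 ≤ γ * ∑ s', ∑ a', f s' * π s' a' * τ s' a' s := by
        apply mul_nonneg hγ0
        apply Finset.sum_nonneg; intro s' _
        apply Finset.sum_nonneg; intro a' _
        exact mul_nonneg (mul_nonneg (hf0 s') (hπ0 s' a')) (hτ0 s' a' s)
      refine max_le ?_ hR
      have hterm : γ * ∑ s', ∑ a', (-(d s')) * π s' a' * τ s' a' s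
          ≤ γ * ∑ s', ∑ a', f s' * π s' a' * τ s' a' s := by
        apply mul_le_mul_of_nonneg_left _ hγ0
        apply Finset.sum_le_sum; intro s' _
        apply Finset.sum_le_sum; intro a' _
        exact mul_le_mul_of_nonneg_right
          (mul_le_mul_of_nonneg_right (le_max_left _ _) (hπ0 s' a')) (hτ0 s' a' s)
      have hι' : 0 ≤ (1 - γ) * ι s := (mul_pos (by linarith) (hι s)).le
      have hneg : -(d s) = -((1 - γ) * ι s)
          + γ * ∑ s', ∑ a', (-(d s')) * π s' a' * τ s' a' s := by
        have : ∑ s', ∑ a', (-(d s')) * π s' a' * τ s' a' s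
            = -∑ s', ∑ a', d s' * π s' a' * τ s' a' s := by
          simp [neg_mul, Finset.sum_neg_distrib]
        rw [this, hvis s]; ring
      linarith
    have hsumf : ∑ s, f s ≤ γ * ∑ s, f s := by
      have h1 : ∑ s, f s ≤ ∑ s, γ * ∑ s', ∑ a', f s' * π s' a' * τ s' a' s :=
        Finset.sum_le_sum fun s _ => hfle s
      have h2 : ∑ s, γ * ∑ s', ∑ a', f s' * π s' a' * τ s' a' s
          = γ * ∑ s, f s := by
        rw [← Finset.mul_sum, Finset.sum_comm]
        congr 1
        refine Finset.sum_congr rfl fun s' _ => ?_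
        rw [Finset.sum_comm]
        calc ∑ a', ∑ s, f s' * π s' a' * τ s' a' s
            = ∑ a', f s' * π s' a' * ∑ s, τ s' a' s := by
              refine Finset.sum_congr rfl fun a' _ => ?_
              rw [Finset.mul_sum]
          _ = ∑ a', f s' * π s' a' := by
              refine Finset.sum_congr rfl fun a' _ => ?_
              rw [hτ1 s' a', mul_one]
          _ = f s' := by rw [← Finset.mul_sum, hπ1 s', mul_one]
      linarith
    have hfzero : ∑ s, f s = 0 := by
      have hge : 0 ≤ ∑ s, f s := Finset.sum_nonneg fun s _ => hf0 s
      nlinarith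
    have hd_nonneg : ∀ s, 0 ≤ d s := by
      intro s
      have := (Finset.sum_eq_zero_iff_of_nonneg (fun s _ => hf0 s)).mp hfzero s
        (Finset.mem_univ s)
      have h' : -(d s) ≤ f s := le_max_left _ _
      rw [this] at h'
      linarith
    apply hOpt d
    refine ⟨?_, ?_, ?_⟩
    · intro s; rw [← Finset.mul_sum, hπ1 s, mul_one]
    · intro s; exact hvis s
    · intro s a; exact mul_nonneg (hd_nonneg s) (hπ0 s a)
end

section
/- Let (v*, q*) be an optimal solution of the value-learning primal LP. Then v* and q* satisfy the Bellman optimality equations: v*(s) = max_a Σ_{s'} τ(s'|s,a)(r(s,a,s') + γ v*(s')) for every state s, and q*(s,a) = Σ_{s'} τ(s'|s,a)(r(s,a,s') + γ max_{a'} q*(s',a')) for all s,a. Consequently v* and q* are the optimal value functions v^* and q^* of the MDP. -/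
/-!
Write `T v (s) = max_a Σ_{s'} τ(s'|s,a)(r(s,a,s') + γ v(s'))` for the Bellman optimality operator.
Primal feasibility of `(v, q)` says exactly `q = Q(v)` (the one-step lookahead of `v`) and
`T v ≤ v`. Since `T` is monotone, `(T v, Q(T v))` is again feasible; for an optimal `v*` this gives
`Σ ι(s)(1 - γ) v*(s) ≤ Σ ι(s)(1 - γ) (T v*)(s)`, which together with `T v* ≤ v*` and the positivity
of the weights forces `T v* = v*`.
So `v*` is a fixed point of `T`, and `q* = Q(v*)` then satisfies the `q`-form of the equations.
Uniqueness holds because `T` is a `γ`-contraction for the sup norm.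
-/

open Finset

open Function

lemma ciSup_le_ciSup_add_of_forall_le_add {ι : Type*} [Finite ι] [Nonempty ι] {f g : ι → ℝ}
    {c : ℝ} (h : ∀ i, f i ≤ g i + c) : ⨆ i, f i ≤ (⨆ i, g i) + c :=
  ciSup_le fun i => (h i).trans (add_le_add_left (le_ciSup (Finite.bddAbove_range g) i) c)

lemma abs_ciSup_sub_ciSup_le {ι : Type*} [Finite ι] [Nonempty ι] {f g : ι → ℝ} {c : ℝ}
    (h : ∀ i, |f i - g i| ≤ c) : |(⨆ i, f i) - ⨆ i, g i| ≤ c := by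
  rw [abs_sub_le_iff, sub_le_iff_le_add', sub_le_iff_le_add']
  constructor
  · exact ciSup_le_ciSup_add_of_forall_le_add fun i => by linarith [(abs_sub_le_iff.1 (h i)).1]
  · exact ciSup_le_ciSup_add_of_forall_le_add fun i => by linarith [(abs_sub_le_iff.1 (h i)).2]

lemma eq_of_le_of_sum_mul_le {ι : Type*} [Fintype ι] {w f g : ι → ℝ} (hw : ∀ i, 0 < w i)
    (hfg : ∀ i, f i ≤ g i) (h : ∑ i, w i * g i ≤ ∑ i, w i * f i) : f = g := by
  have hle : ∀ i ∈ univ, w i * f i ≤ w i * g i := fun i _ =>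
    mul_le_mul_of_nonneg_left (hfg i) (hw i).le
  have heq := (sum_eq_sum_iff_of_le hle).1 (le_antisymm (sum_le_sum hle) h)
  exact funext fun i => mul_left_cancel₀ (hw i).ne' (heq i (mem_univ i))

section Bellman

variable {S A : Type*} [Fintype S] (τ : S → A → S → ℝ) (r : S → A → S → ℝ) (γ : ℝ)

noncomputable def qBackup (v : S → ℝ) (s : S) (a : A) : ℝ :=
  ∑ s', τ s a s' * (r s a s' + γ * v s')

noncomputable def bellmanOpt (v : S → ℝ) (s : S) : ℝ :=
  ⨆ a, qBackup τ r γ v s a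

def VLPrimalFeasible (v : S → ℝ) (q : S → A → ℝ) : Prop :=
  (∀ s a, q s a ≤ v s) ∧ ∀ s a, q s a = ∑ s', τ s a s' * (r s a s' + γ * v s')

variable {τ r γ}

lemma qBackup_mono (hτ : ∀ s a s', 0 ≤ τ s a s') (hγ : 0 ≤ γ) :
    Monotone (qBackup τ r γ) := fun _ _ hvw s a =>
  sum_le_sum fun s' _ => mul_le_mul_of_nonneg_left
    (add_le_add_right (mul_le_mul_of_nonneg_left (hvw s') hγ) _) (hτ s a s')

lemma qBackup_sub (v w : S → ℝ) (s : S) (a : A) :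
    qBackup τ r γ v s a - qBackup τ r γ w s a = γ * ∑ s', τ s a s' * (v s' - w s') := by
  simp only [qBackup, ← sum_sub_distrib, mul_sum]
  exact sum_congr rfl fun s' _ => by ring

lemma abs_qBackup_sub_le (hτ : ∀ s a s', 0 ≤ τ s a s') (hτ1 : ∀ s a, ∑ s', τ s a s' = 1)
    (hγ : 0 ≤ γ) (v w : S → ℝ) (s : S) (a : A) :
    |qBackup τ r γ v s a - qBackup τ r γ w s a| ≤ γ * dist v w := by
  have hsum : |∑ s', τ s a s' * (v s' - w s')| ≤ ∑ s', τ s a s' * dist v w := by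
    refine (abs_sum_le_sum_abs _ _).trans (sum_le_sum fun s' _ => ?_)
    rw [abs_mul, abs_of_nonneg (hτ s a s'), ← Real.dist_eq]
    exact mul_le_mul_of_nonneg_left (dist_le_pi_dist v w s') (hτ s a s')
  calc |qBackup τ r γ v s a - qBackup τ r γ w s a|
      = γ * |∑ s', τ s a s' * (v s' - w s')| := by
        rw [qBackup_sub, abs_mul, abs_of_nonneg hγ]
    _ ≤ γ * ∑ s', τ s a s' * dist v w := mul_le_mul_of_nonneg_left hsum hγ
    _ = γ * dist v w := by rw [← sum_mul, hτ1, one_mul]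

lemma bellmanOpt_contractingWith [Finite A] [Nonempty A] (hτ : ∀ s a s', 0 ≤ τ s a s')
    (hτ1 : ∀ s a, ∑ s', τ s a s' = 1) (hγ0 : 0 ≤ γ) (hγ1 : γ < 1) :
    ContractingWith γ.toNNReal (bellmanOpt τ r γ) := by
  refine ⟨by simpa using hγ1, LipschitzWith.of_dist_le_mul fun v w => ?_⟩
  rw [Real.coe_toNNReal γ hγ0, dist_pi_le_iff (mul_nonneg hγ0 dist_nonneg)]
  intro s
  rw [Real.dist_eq]
  exact abs_ciSup_sub_ciSup_le fun a => abs_qBackup_sub_le hτ hτ1 hγ0 v w s a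

lemma bellmanOpt_le_of_feasible [Nonempty A] {v : S → ℝ} {q : S → A → ℝ}
    (h : VLPrimalFeasible τ r γ v q) : bellmanOpt τ r γ v ≤ v := fun s =>
  ciSup_le fun a => (h.2 s a).symm.trans_le (h.1 s a)

lemma feasible_bellmanOpt [Finite A] (hτ : ∀ s a s', 0 ≤ τ s a s') (hγ : 0 ≤ γ)
    {v : S → ℝ} (hv : bellmanOpt τ r γ v ≤ v) :
    VLPrimalFeasible τ r γ (bellmanOpt τ r γ v) (qBackup τ r γ (bellmanOpt τ r γ v)) :=
  ⟨fun s a => (qBackup_mono hτ hγ hv s a).trans (le_ciSup (Finite.bddAbove_range _) a),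
    fun _ _ => rfl⟩

lemma isFixedPt_bellmanOpt_of_isMinimal [Finite A] [Nonempty A] {ι : S → ℝ}
    (hι : ∀ s, 0 < ι s) (hτ : ∀ s a s', 0 ≤ τ s a s') (hγ0 : 0 ≤ γ) (hγ1 : γ < 1)
    {vStar : S → ℝ} {qStar : S → A → ℝ} (hFeas : VLPrimalFeasible τ r γ vStar qStar)
    (hOpt : ∀ v q, VLPrimalFeasible τ r γ v q →
      ∑ s, ι s * ((1 - γ) * vStar s) ≤ ∑ s, ι s * ((1 - γ) * v s)) :
    IsFixedPt (bellmanOpt τ r γ) vStar := by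
  have hle := bellmanOpt_le_of_feasible hFeas
  have hobj := hOpt _ _ (feasible_bellmanOpt hτ hγ0 hle)
  have hscaled := eq_of_le_of_sum_mul_le hι
    (fun s => mul_le_mul_of_nonneg_left (hle s) (sub_nonneg.2 hγ1.le)) hobj
  exact funext fun s => mul_left_cancel₀ (sub_pos.2 hγ1).ne' (congrFun hscaled s)

lemma isFixedPt_bellmanOpt_iSup {q : S → A → ℝ}
    (hq : ∀ s a, q s a = qBackup τ r γ (fun s' => ⨆ a', q s' a') s a) :
    IsFixedPt (bellmanOpt τ r γ) fun s => ⨆ a, q s a :=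
  funext fun s => iSup_congr fun a => (hq s a).symm

end Bellman

theorem vl_primal_bellman_optimality_general
    {S A : Type*} [Fintype S] [Fintype A] [Nonempty A]
    (ι : S → ℝ) (τ : S → A → S → ℝ) (γ : ℝ) (r : S → A → S → ℝ)
    (hMDP : IsMDP ι τ γ)
    (vStar : S → ℝ) (qStar : S → A → ℝ)
    (hFeas : (∀ s a, qStar s a ≤ vStar s) ∧
      (∀ s a, qStar s a = ∑ s', τ s a s' * (r s a s' + γ * vStar s')))
    (hOpt : ∀ (v : S → ℝ) (q : S → A → ℝ),
      ((∀ s a, q s a ≤ v s) ∧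
        (∀ s a, q s a = ∑ s', τ s a s' * (r s a s' + γ * v s'))) →
      ∑ s, ι s * ((1 - γ) * vStar s) ≤ ∑ s, ι s * ((1 - γ) * v s)) :
    (∀ s, vStar s = ⨆ a, ∑ s', τ s a s' * (r s a s' + γ * vStar s')) ∧
    (∀ s a, qStar s a = ∑ s', τ s a s' * (r s a s' + γ * ⨆ a', qStar s' a')) ∧
    (∀ v : S → ℝ,
      (∀ s, v s = ⨆ a, ∑ s', τ s a s' * (r s a s' + γ * v s')) → v = vStar) ∧
    (∀ q : S → A → ℝ,
      (∀ s a, q s a = ∑ s', τ s a s' * (r s a s' + γ * ⨆ a', q s' a')) → q = qStar) := by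
  obtain ⟨hι, -, hτ, hτ1, hγ0, hγ1⟩ := hMDP
  have hT := bellmanOpt_contractingWith (r := r) hτ hτ1 hγ0 hγ1
  have hfix : IsFixedPt (bellmanOpt τ r γ) vStar :=
    isFixedPt_bellmanOpt_of_isMinimal hι hτ hγ0 hγ1 hFeas hOpt
  have hqStar : qStar = qBackup τ r γ vStar := funext₂ hFeas.2
  have hiSup : ∀ s, ⨆ a, qStar s a = vStar s := by rw [hqStar]; exact congrFun hfix
  refine ⟨fun s => (congrFun hfix s).symm, fun s a => ?_, fun v hv => ?_, fun q hq => ?_⟩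
  · simp only [hiSup]; exact hFeas.2 s a
  · exact hT.fixedPoint_unique' (funext fun s => (hv s).symm) hfix
  · have hw := congrFun (hT.fixedPoint_unique' (isFixedPt_bellmanOpt_iSup hq) hfix)
    ext s a
    rw [hq s a, hFeas.2 s a]
    simp only [hw]

/-- an optimal solution `(v*, q*)` of the value-learning primal LP satisfies
the Bellman optimality equations, and hence equals the optimal value functions of the MDP
(the unique solutions of the Bellman optimality equations). -/
theorem vl_primal_bellman_optimality
    {S A : Type*} [Fintype S] [Fintype A] [Nonempty S] [Nonempty A]
    (ι : S → ℝ) (τ : S → A → S → ℝ) (γ : ℝ) (r : S → A → S → ℝ)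
    (hMDP : IsMDP ι τ γ)
    (vStar : S → ℝ) (qStar : S → A → ℝ)
    (hFeas : (∀ s a, qStar s a ≤ vStar s) ∧
      (∀ s a, qStar s a = ∑ s', τ s a s' * (r s a s' + γ * vStar s')))
    (hOpt : ∀ (v : S → ℝ) (q : S → A → ℝ),
      ((∀ s a, q s a ≤ v s) ∧
        (∀ s a, q s a = ∑ s', τ s a s' * (r s a s' + γ * v s'))) →
      ∑ s, ι s * ((1 - γ) * vStar s) ≤ ∑ s, ι s * ((1 - γ) * v s)) :
    (∀ s, vStar s = ⨆ a, ∑ s', τ s a s' * (r s a s' + γ * vStar s')) ∧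
    (∀ s a, qStar s a = ∑ s', τ s a s' * (r s a s' + γ * ⨆ a', qStar s' a')) ∧
    (∀ v : S → ℝ,
      (∀ s, v s = ⨆ a, ∑ s', τ s a s' * (r s a s' + γ * v s')) → v = vStar) ∧
    (∀ q : S → A → ℝ,
      (∀ s a, q s a = ∑ s', τ s a s' * (r s a s' + γ * ⨆ a', q s' a')) → q = qStar) :=
  vl_primal_bellman_optimality_general ι τ γ r hMDP vStar qStar hFeas hOpt
end

section
/- Given a policy π, let (d*, p*) be an optimal solution of the policy-evaluation dual LP for π. Then d* is a probability distribution on S, p* is a probability distribution on S×A, and they equal the visitation densities of π: d*(s) = d^π(s) for all s and p*(s,a) = p^π(s,a) for all s,a. -/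
open Finset

/-- an optimal solution `(d*, p*)` of the policy-evaluation dual LP for a
policy `π` consists of probability distributions on `S` and `S × A`, which equal the
visitation densities `d^π` and `p^π` of `π`. -/
theorem pe_dual_is_visitation_density
    {S A : Type*} [Fintype S] [Fintype A] [Nonempty S] [Nonempty A]
    (ι : S → ℝ) (τ : S → A → S → ℝ) (γ : ℝ) (r : S → A → S → ℝ)
    (hMDP : IsMDP ι τ γ)
    (π : S → A → ℝ) (hPol : IsPolicy π)
    (dStar : S → ℝ) (pStar : S → A → ℝ)
    (hFeas : (∀ s, dStar s = (1 - γ) * ι s + γ * ∑ s', ∑ a', pStar s' a' * τ s' a' s) ∧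
      (∀ s, 0 ≤ dStar s) ∧ ∀ s a, pStar s a = dStar s * π s a)
    (hOpt : ∀ (d : S → ℝ) (p : S → A → ℝ),
      ((∀ s, d s = (1 - γ) * ι s + γ * ∑ s', ∑ a', p s' a' * τ s' a' s) ∧
        (∀ s, 0 ≤ d s) ∧ ∀ s a, p s a = d s * π s a) →
      DualObj τ r p ≤ DualObj τ r pStar) :
    ((∀ s, 0 ≤ dStar s) ∧ ∑ s, dStar s = 1) ∧
    ((∀ s a, 0 ≤ pStar s a) ∧ ∑ s, ∑ a, pStar s a = 1) ∧
    IsVisit ι τ γ π dStar ∧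
    (∀ d : S → ℝ, IsVisit ι τ γ π d → d = dStar) ∧
    (∀ s a, pStar s a = dStar s * π s a) := by
  obtain ⟨hι, hιsum, hτ0, hτsum, hγ0, hγ1⟩ := hMDP
  obtain ⟨hπ0, hπ1⟩ := hPol
  obtain ⟨hEq, hd0, hp⟩ := hFeas
  have hsum1 : ∀ f : S → A → ℝ,
      ∑ s, ∑ s', ∑ a', f s' a' * τ s' a' s = ∑ s', ∑ a', f s' a' := by
    intro f
    rw [Finset.sum_comm]
    refine Finset.sum_congr rfl fun s' _ => ?_
    rw [Finset.sum_comm]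
    refine Finset.sum_congr rfl fun a' _ => ?_
    rw [← Finset.mul_sum, hτsum, mul_one]
  have hVisit : IsVisit ι τ γ π dStar := by
    intro s
    rw [hEq s]
    congr 2
    refine Finset.sum_congr rfl fun s' _ => Finset.sum_congr rfl fun a' _ => ?_
    rw [hp]
  have hsumd : ∑ s, dStar s = 1 := by
    have h : ∑ s, dStar s = (1 - γ) + γ * ∑ s', dStar s' := by
      calc ∑ s, dStar s
          = ∑ s, ((1 - γ) * ι s + γ * ∑ s', ∑ a', dStar s' * π s' a' * τ s' a' s) :=
            Finset.sum_congr rfl fun s _ => hVisit s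
        _ = (1 - γ) * ∑ s, ι s + γ * ∑ s, ∑ s', ∑ a', dStar s' * π s' a' * τ s' a' s := by
            rw [Finset.sum_add_distrib, Finset.mul_sum, Finset.mul_sum]
        _ = (1 - γ) + γ * ∑ s', ∑ a', dStar s' * π s' a' := by
            rw [hιsum, mul_one, hsum1 (fun s' a' => dStar s' * π s' a')]
        _ = (1 - γ) + γ * ∑ s', dStar s' := by
            congr 1
            congr 1
            refine Finset.sum_congr rfl fun s' _ => ?_
            rw [← Finset.mul_sum, hπ1, mul_one]
    have hγne : (1 : ℝ) - γ ≠ 0 := by linarith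
    have h2 : (1 - γ) * (∑ s, dStar s) = (1 - γ) * 1 := by linear_combination h
    exact mul_left_cancel₀ hγne h2
  have hp0 : ∀ s a, 0 ≤ pStar s a := fun s a => by
    rw [hp]; exact mul_nonneg (hd0 s) (hπ0 s a)
  have hpsum : ∑ s, ∑ a, pStar s a = 1 := by
    calc ∑ s, ∑ a, pStar s a = ∑ s, dStar s := by
          refine Finset.sum_congr rfl fun s _ => ?_
          simp only [hp]
          rw [← Finset.mul_sum, hπ1, mul_one]
      _ = 1 := hsumd
  have hUniq : ∀ d : S → ℝ, IsVisit ι τ γ π d → d = dStar := by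
    intro d hd
    set e := fun s => d s - dStar s with he
    have hkey : ∀ s, e s = γ * ∑ s', ∑ a', e s' * π s' a' * τ s' a' s := by
      intro s
      have hsplit : ∑ s', ∑ a', e s' * π s' a' * τ s' a' s
          = (∑ s', ∑ a', d s' * π s' a' * τ s' a' s)
            - ∑ s', ∑ a', dStar s' * π s' a' * τ s' a' s := by
        rw [← Finset.sum_sub_distrib]
        refine Finset.sum_congr rfl fun s' _ => ?_
        rw [← Finset.sum_sub_distrib]
        refine Finset.sum_congr rfl fun a' _ => ?_
        simp only [he]; ring
      rw [hsplit]
      simp only [he]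
      linear_combination (hd s) - (hVisit s)
    have habs : ∑ s, |e s| ≤ γ * ∑ s, |e s| := by
      calc ∑ s, |e s|
          ≤ ∑ s, γ * ∑ s', ∑ a', |e s'| * π s' a' * τ s' a' s := by
            refine Finset.sum_le_sum fun s _ => ?_
            rw [hkey s, abs_mul, abs_of_nonneg hγ0]
            refine mul_le_mul_of_nonneg_left ?_ hγ0
            calc |∑ s', ∑ a', e s' * π s' a' * τ s' a' s|
                ≤ ∑ s', |∑ a', e s' * π s' a' * τ s' a' s| :=
                  Finset.abs_sum_le_sum_abs _ _
              _ ≤ ∑ s', ∑ a', |e s' * π s' a' * τ s' a' s| :=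
                  Finset.sum_le_sum fun s' _ => Finset.abs_sum_le_sum_abs _ _
              _ = ∑ s', ∑ a', |e s'| * π s' a' * τ s' a' s := by
                  refine Finset.sum_congr rfl fun s' _ => Finset.sum_congr rfl fun a' _ => ?_
                  rw [abs_mul, abs_mul, abs_of_nonneg (hπ0 s' a'), abs_of_nonneg (hτ0 s' a' s)]
        _ = γ * ∑ s, ∑ s', ∑ a', |e s'| * π s' a' * τ s' a' s := by rw [Finset.mul_sum]
        _ = γ * ∑ s', ∑ a', |e s'| * π s' a' := by
            rw [hsum1 (fun s' a' => |e s'| * π s' a')]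
        _ = γ * ∑ s, |e s| := by
            congr 1
            refine Finset.sum_congr rfl fun s' _ => ?_
            rw [← Finset.mul_sum, hπ1, mul_one]
    have h0 : 0 ≤ ∑ s, |e s| := Finset.sum_nonneg fun s _ => abs_nonneg _
    have hsum0 : ∑ s, |e s| = 0 := by nlinarith
    funext s
    have : |e s| = 0 :=
      (Finset.sum_eq_zero_iff_of_nonneg (fun s _ => abs_nonneg (e s))).mp hsum0 s
        (Finset.mem_univ s)
    have he0 : e s = 0 := abs_eq_zero.mp this
    simp only [he] at he0
    linarith
  exact ⟨⟨hd0, hsumd⟩, ⟨hp0, hpsum⟩, hVisit, hUniq, hp⟩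
end

section
/- Given a policy π, let (v*, q*) be an optimal solution of the policy-evaluation primal LP for π. Then v* satisfies the Bellman equation v*(s) = Σ_a π(a|s) Σ_{s'} τ(s'|s,a)(r(s,a,s') + γ v*(s')) for every state s, and q*(s,a) = Σ_{s'} τ(s'|s,a)(r(s,a,s') + γ v*(s')) for all s,a. Consequently v* = v^π and q* = q^π, the value functions of π. -/
open Finset

/-! Let `T` be the Bellman operator of `π`, so that the feasible points of the LP are the
`(v, Q v)` with `T v ≤ v`. Since `T` is monotone, `T v*` is feasible whenever `v*` is; if the
constraint were slack at some state, `T v*` would have strictly smaller objective because `ι > 0`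
and `γ < 1`. Hence `T v* = v*`. As `T` is a `γ`-contraction in the sup norm, this fixed point is
unique, which identifies `v*` with `v^π` and `q* = Q v*` with `q^π`. -/

section Bellman

variable {S A : Type*} [Fintype S] [Fintype A]

lemma abs_sum_mul_le_of_sum_eq_one {ι : Type*} [Fintype ι] {w f : ι → ℝ} {c : ℝ}
    (hw0 : ∀ i, 0 ≤ w i) (hw1 : ∑ i, w i = 1) (hf : ∀ i, |f i| ≤ c) :
    |∑ i, w i * f i| ≤ c :=
  calc |∑ i, w i * f i| ≤ ∑ i, w i * |f i| := by
        simpa only [abs_mul, abs_of_nonneg (hw0 _)] using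
          abs_sum_le_sum_abs (fun i => w i * f i) univ
    _ ≤ ∑ i, w i * c := by gcongr with i; exacts [hw0 i, hf i]
    _ = c := by rw [← sum_mul, hw1, one_mul]

lemma strictMono_sum_mul {w : S → ℝ} (hw : ∀ s, 0 < w s) :
    StrictMono fun v : S → ℝ => ∑ s, w s * v s := by
  intro u v huv
  obtain ⟨hle, s, hlt⟩ := Pi.lt_def.1 huv
  exact sum_lt_sum (fun s _ => by gcongr; exacts [(hw s).le, hle s])
    ⟨s, mem_univ s, by gcongr; exact hw s⟩

lemma Monotone.eq_of_isMinOn_strictMono {α β : Type*} [PartialOrder α] [Preorder β]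
    {T : α → α} (hT : Monotone T) {φ : α → β} (hφ : StrictMono φ) {v : α}
    (hv : T v ≤ v) (hmin : IsMinOn φ {w | T w ≤ w} v) : T v = v := by
  by_contra hne
  -- `T v` is again post-fixed, and strictly below `v`.
  have hTv : T (T v) ≤ T v := hT hv
  exact (hmin hTv).not_gt (hφ (lt_of_le_of_ne hv hne))

variable (τ : S → A → S → ℝ) (r : S → A → S → ℝ) (γ : ℝ) (π : S → A → ℝ)

def actionValue (v : S → ℝ) (s : S) (a : A) : ℝ :=
  ∑ s', τ s a s' * (r s a s' + γ * v s')

def bellmanOp (v : S → ℝ) (s : S) : ℝ :=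
  ∑ a, π s a * actionValue τ r γ v s a

lemma bellmanOp_sub (u v : S → ℝ) (s : S) :
    bellmanOp τ r γ π u s - bellmanOp τ r γ π v s =
      γ * ∑ a, π s a * ∑ s', τ s a s' * (u s' - v s') := by
  simp only [bellmanOp, actionValue, ← sum_sub_distrib, mul_sum, ← mul_sub]
  refine sum_congr rfl fun a _ => sum_congr rfl fun s' _ => by ring

variable {τ γ π}

lemma bellmanOp_monotone (hτ0 : ∀ s a s', 0 ≤ τ s a s') (hγ0 : 0 ≤ γ)
    (hπ0 : ∀ s a, 0 ≤ π s a) : Monotone (bellmanOp τ r γ π) := by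
  intro u v huv s
  unfold bellmanOp actionValue
  gcongr with a _ s' _
  exacts [hπ0 s a, hτ0 s a s', huv s']

lemma bellmanOp_contractingWith (hτ0 : ∀ s a s', 0 ≤ τ s a s') (hτ1 : ∀ s a, ∑ s', τ s a s' = 1)
    (hγ0 : 0 ≤ γ) (hγ1 : γ < 1) (hπ0 : ∀ s a, 0 ≤ π s a) (hπ1 : ∀ s, ∑ a, π s a = 1) :
    ContractingWith ⟨γ, hγ0⟩ (bellmanOp τ r γ π) := by
  refine ⟨hγ1, LipschitzWith.of_dist_le_mul fun u v =>
    (dist_pi_le_iff (by positivity)).2 fun s => ?_⟩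
  have hdiff : ∀ s', |u s' - v s'| ≤ dist u v := fun s' =>
    (Real.dist_eq _ _).symm.trans_le (dist_le_pi_dist u v s')
  rw [Real.dist_eq, bellmanOp_sub, abs_mul, abs_of_nonneg hγ0]
  exact mul_le_mul_of_nonneg_left (abs_sum_mul_le_of_sum_eq_one (hπ0 s) (hπ1 s) fun a =>
    abs_sum_mul_le_of_sum_eq_one (hτ0 s a) (hτ1 s a) hdiff) hγ0

end Bellman

theorem pe_primal_bellman_general
    {S A : Type*} [Fintype S] [Fintype A]
    (ι : S → ℝ) (τ : S → A → S → ℝ) (γ : ℝ) (r : S → A → S → ℝ)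
    (hMDP : IsMDP ι τ γ)
    (π : S → A → ℝ) (hPol : IsPolicy π)
    (vStar : S → ℝ) (qStar : S → A → ℝ)
    (hFeas : (∀ s, ∑ a, π s a * qStar s a ≤ vStar s) ∧
      (∀ s a, qStar s a = ∑ s', τ s a s' * (r s a s' + γ * vStar s')))
    (hOpt : ∀ (v : S → ℝ) (q : S → A → ℝ),
      ((∀ s, ∑ a, π s a * q s a ≤ v s) ∧
        (∀ s a, q s a = ∑ s', τ s a s' * (r s a s' + γ * v s'))) →
      ∑ s, ι s * ((1 - γ) * vStar s) ≤ ∑ s, ι s * ((1 - γ) * v s)) :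
    (∀ s, vStar s = ∑ a, π s a * ∑ s', τ s a s' * (r s a s' + γ * vStar s')) ∧
    (∀ s a, qStar s a = ∑ s', τ s a s' * (r s a s' + γ * vStar s')) ∧
    (∀ v : S → ℝ,
      (∀ s, v s = ∑ a, π s a * ∑ s', τ s a s' * (r s a s' + γ * v s')) → v = vStar) ∧
    (∀ q : S → A → ℝ,
      (∀ s a, q s a = ∑ s', τ s a s' * (r s a s' + γ * ∑ a', π s' a' * q s' a')) →
      q = qStar) := by
  obtain ⟨hι, -, hτ0, hτ1, hγ0, hγ1⟩ := hMDP
  obtain ⟨hπ0, hπ1⟩ := hPol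
  obtain ⟨hle, hq⟩ := hFeas
  obtain rfl : qStar = actionValue τ r γ vStar := funext₂ hq
  have hObj : StrictMono fun v : S → ℝ => ∑ s, ι s * ((1 - γ) * v s) := by
    simpa only [mul_assoc] using strictMono_sum_mul fun s => mul_pos (hι s) (sub_pos.2 hγ1)
  have hFix : bellmanOp τ r γ π vStar = vStar :=
    (bellmanOp_monotone r hτ0 hγ0 hπ0).eq_of_isMinOn_strictMono hObj hle
      fun w hw => hOpt w (actionValue τ r γ w) ⟨hw, fun _ _ => rfl⟩
  have hUnique : ∀ v, bellmanOp τ r γ π v = v → v = vStar := fun v hv =>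
    (bellmanOp_contractingWith r hτ0 hτ1 hγ0 hγ1 hπ0 hπ1).fixedPoint_unique' hv hFix
  refine ⟨fun s => (congrFun hFix s).symm, fun _ _ => rfl,
    fun v hv => hUnique v (funext fun s => (hv s).symm), fun q hq' => ?_⟩
  have hv : (fun s => ∑ a, π s a * q s a) = vStar :=
    hUnique _ (funext fun s => sum_congr rfl fun a _ => congrArg _ (hq' s a).symm)
  funext s a
  rw [hq' s a, ← hv]
  rfl

/-- an optimal solution `(v*, q*)` of the policy-evaluation primal LP for a
policy `π` satisfies the Bellman equation of `π`, and hence equals the value functions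
`v^π`, `q^π` (the unique solutions of the Bellman equation). -/
theorem pe_primal_bellman
    {S A : Type*} [Fintype S] [Fintype A] [Nonempty S] [Nonempty A]
    (ι : S → ℝ) (τ : S → A → S → ℝ) (γ : ℝ) (r : S → A → S → ℝ)
    (hMDP : IsMDP ι τ γ)
    (π : S → A → ℝ) (hPol : IsPolicy π)
    (vStar : S → ℝ) (qStar : S → A → ℝ)
    (hFeas : (∀ s, ∑ a, π s a * qStar s a ≤ vStar s) ∧
      (∀ s a, qStar s a = ∑ s', τ s a s' * (r s a s' + γ * vStar s')))
    (hOpt : ∀ (v : S → ℝ) (q : S → A → ℝ),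
      ((∀ s, ∑ a, π s a * q s a ≤ v s) ∧
        (∀ s a, q s a = ∑ s', τ s a s' * (r s a s' + γ * v s'))) →
      ∑ s, ι s * ((1 - γ) * vStar s) ≤ ∑ s, ι s * ((1 - γ) * v s)) :
    (∀ s, vStar s = ∑ a, π s a * ∑ s', τ s a s' * (r s a s' + γ * vStar s')) ∧
    (∀ s a, qStar s a = ∑ s', τ s a s' * (r s a s' + γ * vStar s')) ∧
    (∀ v : S → ℝ,
      (∀ s, v s = ∑ a, π s a * ∑ s', τ s a s' * (r s a s' + γ * v s')) → v = vStar) ∧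
    (∀ q : S → A → ℝ,
      (∀ s a, q s a = ∑ s', τ s a s' * (r s a s' + γ * ∑ a', π s' a' * q s' a')) →
      q = qStar) :=
  pe_primal_bellman_general ι τ γ r hMDP π hPol vStar qStar hFeas hOpt
end

section
/- Given a policy π, let (v*, q*) be an optimal solution of the entropy-regularized policy-evaluation primal LP for π. Then v*(s) = Σ_a π(a|s)(q*(s,a) − α log(π(a|s)/π_T(a|s))) for every state s and q*(s,a) = Σ_{s'} τ(s'|s,a)(r(s,a,s') + γ v*(s')) for all s,a; that is, v* and q* satisfy the entropy-regularized Bellman equation and equal the entropy-regularized value functions v_ER^π and q_ER^π of π. -/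
open Finset

/-- an optimal solution `(v*, q*)` of the entropy-regularized
policy-evaluation primal LP for `π` satisfies the entropy-regularized Bellman equation
and hence equals the entropy-regularized value functions of `π` (the unique solutions). -/
theorem er_pe_primal_bellman
    {S A : Type*} [Fintype S] [Fintype A] [Nonempty S] [Nonempty A]
    (ι : S → ℝ) (τ : S → A → S → ℝ) (γ : ℝ) (r : S → A → S → ℝ)
    (hMDP : IsMDP ι τ γ)
    (α : ℝ) (hα : 0 < α)
    (πT : S → A → ℝ) (hπT : IsPolicy πT) (hπTpos : ∀ s a, 0 < πT s a)
    (π : S → A → ℝ) (hPol : IsPolicy π)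
    (vStar : S → ℝ) (qStar : S → A → ℝ)
    (hFeas : (∀ s, ∑ a, π s a * (qStar s a - α * Real.log (π s a / πT s a)) ≤ vStar s) ∧
      (∀ s a, qStar s a = ∑ s', τ s a s' * (r s a s' + γ * vStar s')))
    (hOpt : ∀ (v : S → ℝ) (q : S → A → ℝ),
      ((∀ s, ∑ a, π s a * (q s a - α * Real.log (π s a / πT s a)) ≤ v s) ∧
        (∀ s a, q s a = ∑ s', τ s a s' * (r s a s' + γ * v s'))) →
      ∑ s, ι s * ((1 - γ) * vStar s) ≤ ∑ s, ι s * ((1 - γ) * v s)) :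
    (∀ s, vStar s = ∑ a, π s a * (qStar s a - α * Real.log (π s a / πT s a))) ∧
    (∀ s a, qStar s a = ∑ s', τ s a s' * (r s a s' + γ * vStar s')) ∧
    (∀ v : S → ℝ,
      (∀ s, v s = ∑ a, π s a *
        ((∑ s', τ s a s' * (r s a s' + γ * v s')) - α * Real.log (π s a / πT s a))) →
      v = vStar) := by

  obtain ⟨hι, hιsum, hτ, hτsum, hγ0, hγ1⟩ := hMDP
  obtain ⟨hπ0, hπ1⟩ := hPol
  set L : S → A → ℝ := fun s a => α * Real.log (π s a / πT s a) with hL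
  set T : (S → ℝ) → S → ℝ := fun v s =>
    ∑ a, π s a * ((∑ s', τ s a s' * (r s a s' + γ * v s')) - L s a) with hT
  -- monotonicity of T
  have hmono : ∀ v w : S → ℝ, (∀ s, v s ≤ w s) → ∀ s, T v s ≤ T w s := by
    intro v w hvw s
    apply Finset.sum_le_sum
    intro a _
    apply mul_le_mul_of_nonneg_left _ (hπ0 s a)
    apply sub_le_sub_right
    apply Finset.sum_le_sum
    intro s' _
    apply mul_le_mul_of_nonneg_left _ (hτ s a s')
    nlinarith [hvw s']
  have hTvStar_eq : ∀ s, T vStar s = ∑ a, π s a * (qStar s a - L s a) := by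
    intro s
    apply Finset.sum_congr rfl
    intro a _
    rw [hFeas.2 s a]
  have hle : ∀ s, T vStar s ≤ vStar s := by
    intro s
    rw [hTvStar_eq s]
    exact hFeas.1 s
  -- the improved pair (v', q') is feasible
  set v' : S → ℝ := T vStar with hv'
  set q' : S → A → ℝ := fun s a => ∑ s', τ s a s' * (r s a s' + γ * v' s') with hq'
  have hfeas' : (∀ s, ∑ a, π s a * (q' s a - L s a) ≤ v' s) ∧
      (∀ s a, q' s a = ∑ s', τ s a s' * (r s a s' + γ * v' s')) := by
    constructor
    · intro s
      have : T v' s ≤ T vStar s := hmono v' vStar hle s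
      exact this
    · intro s a; rfl
  have hsumle := hOpt v' q' hfeas'
  -- termwise inequality forces equality
  have hterm : ∀ s ∈ Finset.univ, ι s * ((1 - γ) * v' s) ≤ ι s * ((1 - γ) * vStar s) := by
    intro s _
    apply mul_le_mul_of_nonneg_left _ (hι s).le
    apply mul_le_mul_of_nonneg_left (hle s) (by linarith)
  have hsumeq : ∑ s, ι s * ((1 - γ) * v' s) = ∑ s, ι s * ((1 - γ) * vStar s) :=
    le_antisymm (Finset.sum_le_sum hterm) hsumle
  have hfix : ∀ s, vStar s = T vStar s := by
    have h := (Finset.sum_eq_sum_iff_of_le hterm).mp hsumeq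
    intro s
    have hs := h s (Finset.mem_univ s)
    have h1 : (1 - γ) * v' s = (1 - γ) * vStar s :=
      mul_left_cancel₀ (ne_of_gt (hι s)) hs
    have h2 : v' s = vStar s :=
      mul_left_cancel₀ (by intro h'; linarith [sub_eq_zero.mp h']) h1
    exact h2.symm
  refine ⟨fun s => by rw [hfix s]; exact hTvStar_eq s, hFeas.2, ?_⟩
  -- uniqueness via contraction
  intro v hv
  have hvfix : ∀ s, v s = T v s := hv
  -- contraction estimate
  obtain ⟨s₀, _, hs₀⟩ := Finset.exists_max_image Finset.univ
    (fun s => |v s - vStar s|) ⟨Classical.arbitrary S, Finset.mem_univ _⟩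
  set M : ℝ := |v s₀ - vStar s₀| with hM
  have hMnn : 0 ≤ M := abs_nonneg _
  have hbound : ∀ s, |v s - vStar s| ≤ M := fun s => hs₀ s (Finset.mem_univ s)
  have hdiff : ∀ s, T v s - T vStar s
      = ∑ a, π s a * (γ * ∑ s', τ s a s' * (v s' - vStar s')) := by
    intro s
    rw [hT]
    simp only
    rw [← Finset.sum_sub_distrib]
    apply Finset.sum_congr rfl
    intro a _
    have h3 : (∑ s', τ s a s' * (r s a s' + γ * v s'))
        - (∑ s', τ s a s' * (r s a s' + γ * vStar s'))
        = γ * ∑ s', τ s a s' * (v s' - vStar s') := by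
      rw [← Finset.sum_sub_distrib, Finset.mul_sum]
      apply Finset.sum_congr rfl
      intro s' _
      ring
    calc π s a * ((∑ s', τ s a s' * (r s a s' + γ * v s')) - L s a)
        - π s a * ((∑ s', τ s a s' * (r s a s' + γ * vStar s')) - L s a)
        = π s a * ((∑ s', τ s a s' * (r s a s' + γ * v s'))
            - (∑ s', τ s a s' * (r s a s' + γ * vStar s'))) := by ring
      _ = π s a * (γ * ∑ s', τ s a s' * (v s' - vStar s')) := by rw [h3]
  have hcontr : M ≤ γ * M := by
    calc M = |T v s₀ - T vStar s₀| := by rw [hM, hvfix s₀, hfix s₀]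
      _ = |∑ a, π s₀ a * (γ * ∑ s', τ s₀ a s' * (v s' - vStar s'))| := by rw [hdiff s₀]
      _ ≤ ∑ a, |π s₀ a * (γ * ∑ s', τ s₀ a s' * (v s' - vStar s'))| :=
          Finset.abs_sum_le_sum_abs _ _
      _ ≤ ∑ a, π s₀ a * (γ * M) := by
          apply Finset.sum_le_sum
          intro a _
          rw [abs_mul, abs_of_nonneg (hπ0 s₀ a), abs_mul, abs_of_nonneg hγ0]
          apply mul_le_mul_of_nonneg_left _ (hπ0 s₀ a)
          apply mul_le_mul_of_nonneg_left _ hγ0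
          calc |∑ s', τ s₀ a s' * (v s' - vStar s')|
              ≤ ∑ s', |τ s₀ a s' * (v s' - vStar s')| := Finset.abs_sum_le_sum_abs _ _
            _ ≤ ∑ s', τ s₀ a s' * M := by
                apply Finset.sum_le_sum
                intro s' _
                rw [abs_mul, abs_of_nonneg (hτ s₀ a s')]
                exact mul_le_mul_of_nonneg_left (hbound s') (hτ s₀ a s')
            _ = M := by rw [← Finset.sum_mul, hτsum s₀ a, one_mul]
      _ = γ * M := by rw [← Finset.sum_mul, hπ1 s₀, one_mul]
  have hM0 : M = 0 := by nlinarith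
  funext s
  have := hbound s
  rw [hM0] at this
  have : |v s - vStar s| = 0 := le_antisymm this (abs_nonneg _)
  have := abs_eq_zero.mp this
  linarith [sub_eq_zero.mp this]
end

section
/- Assume the constrained dual LP is feasible. Let (d*, p*) be an optimal solution of the constrained dual LP. Then d*(s) > 0 for every state s, and the policy π*(a|s) = p*(s,a)/d*(s) is an optimal policy for the CMDP: it satisfies ν_k^{π*} ≥ V_k for all k = 1,…,K and maximizes the average reward ρ^π among all policies satisfying these constraints. -/
open Finset

lemma visit_nonneg [Fintype S] [Fintype A] {ι : S → ℝ} {τ : S → A → S → ℝ} {γ : ℝ}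
    (hMDP : IsMDP ι τ γ) {π : S → A → ℝ} (hπ : IsPolicy π) {d : S → ℝ}
    (hd : IsVisit ι τ γ π d) : ∀ s, 0 ≤ d s := by
  obtain ⟨hι, hιsum, hτ, hτsum, hγ0, hγ1⟩ := hMDP
  obtain ⟨hπ0, hπ1⟩ := hπ
  set n : S → ℝ := fun s => max (-(d s)) 0 with hn
  have hn0 : ∀ s, 0 ≤ n s := fun s => le_max_right _ _
  have hnd : ∀ s, -(d s) ≤ n s := fun s => le_max_left _ _
  have key : ∀ s, n s ≤ γ * ∑ s', ∑ a', n s' * π s' a' * τ s' a' s := by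
    intro s
    have hrhs : 0 ≤ γ * ∑ s', ∑ a', n s' * π s' a' * τ s' a' s := by
      apply mul_nonneg hγ0
      apply Finset.sum_nonneg; intro s' _
      apply Finset.sum_nonneg; intro a' _
      exact mul_nonneg (mul_nonneg (hn0 s') (hπ0 s' a')) (hτ s' a' s)
    rcases le_or_gt (-(d s)) 0 with h | h
    · exact le_trans (max_le h le_rfl) hrhs
    · have : n s = -(d s) := max_eq_left h.le
      rw [this, hd s]
      have h1 : -((1 - γ) * ι s + γ * ∑ s', ∑ a', d s' * π s' a' * τ s' a' s)
          ≤ γ * ∑ s', ∑ a', n s' * π s' a' * τ s' a' s := by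
        have h2 : γ * ∑ s', ∑ a', (-(d s')) * π s' a' * τ s' a' s
            ≤ γ * ∑ s', ∑ a', n s' * π s' a' * τ s' a' s := by
          apply mul_le_mul_of_nonneg_left _ hγ0
          apply Finset.sum_le_sum; intro s' _
          apply Finset.sum_le_sum; intro a' _
          exact mul_le_mul_of_nonneg_right
            (mul_le_mul_of_nonneg_right (hnd s') (hπ0 s' a')) (hτ s' a' s)
        have h3 : 0 ≤ (1 - γ) * ι s :=
          mul_nonneg (by linarith) (hι s).le
        have h4 : -((1 - γ) * ι s + γ * ∑ s', ∑ a', d s' * π s' a' * τ s' a' s)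
            ≤ γ * ∑ s', ∑ a', (-(d s')) * π s' a' * τ s' a' s := by
          have : γ * ∑ s', ∑ a', (-(d s')) * π s' a' * τ s' a' s
              = -(γ * ∑ s', ∑ a', d s' * π s' a' * τ s' a' s) := by
            rw [← mul_neg, ← Finset.sum_neg_distrib]
            congr 1; apply Finset.sum_congr rfl; intro s' _
            rw [← Finset.sum_neg_distrib]
            apply Finset.sum_congr rfl; intro a' _; ring
          rw [this]; linarith
        linarith
      exact h1
  have hsum : ∑ s, n s ≤ γ * ∑ s, n s := by
    calc ∑ s, n s ≤ ∑ s, γ * ∑ s', ∑ a', n s' * π s' a' * τ s' a' s :=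
          Finset.sum_le_sum (fun s _ => key s)
      _ = γ * ∑ s, n s := by
          rw [← Finset.mul_sum]
          congr 1
          rw [Finset.sum_comm]
          apply Finset.sum_congr rfl; intro s' _
          rw [Finset.sum_comm]
          calc ∑ a', ∑ s, n s' * π s' a' * τ s' a' s
              = ∑ a', n s' * π s' a' := by
                apply Finset.sum_congr rfl; intro a' _
                rw [← Finset.mul_sum, hτsum s' a', mul_one]
            _ = n s' := by rw [← Finset.mul_sum, hπ1 s', mul_one]
  have hsum0 : 0 ≤ ∑ s, n s := Finset.sum_nonneg (fun s _ => hn0 s)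
  have : ∑ s, n s = 0 := by nlinarith
  have hall : ∀ s ∈ Finset.univ, n s = 0 :=
    (Finset.sum_eq_zero_iff_of_nonneg (fun s _ => hn0 s)).mp this
  intro s
  have := hall s (Finset.mem_univ s)
  have : -(d s) ≤ 0 := by rw [← this]; exact le_max_left _ _
  linarith

/-- an optimal solution `(d*, p*)` of the constrained dual LP (assumed
feasible) has `d* > 0` everywhere and the derived policy `π* = p*/d*` is an optimal
policy for the CMDP: it satisfies `ν_k^{π*} ≥ V_k` for all `k` and maximizes the average
reward among all policies satisfying these constraints. -/
theorem crl_dual_gives_optimal_policy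
    {S A : Type*} [Fintype S] [Fintype A] [Nonempty S] [Nonempty A]
    (ι : S → ℝ) (τ : S → A → S → ℝ) (γ : ℝ) (r : S → A → S → ℝ)
    (hMDP : IsMDP ι τ γ)
    {K : ℕ} (rk : Fin K → S → A → S → ℝ) (V : Fin K → ℝ)
    (dStar : S → ℝ) (pStar : S → A → ℝ)
    (hFeas : DualFeas ι τ γ dStar pStar ∧
      ∀ k, (1 - γ) * V k ≤ DualObj τ (rk k) pStar)
    (hOpt : ∀ (d : S → ℝ) (p : S → A → ℝ),
      (DualFeas ι τ γ d p ∧ ∀ k, (1 - γ) * V k ≤ DualObj τ (rk k) p) →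
      DualObj τ r p ≤ DualObj τ r pStar) :
    (∀ s, 0 < dStar s) ∧
    IsPolicy (fun s a => pStar s a / dStar s) ∧
    IsVisit ι τ γ (fun s a => pStar s a / dStar s) dStar ∧
    (∀ k, V k ≤ (1 - γ)⁻¹ * DualObj τ (rk k) pStar) ∧
    (∀ (π : S → A → ℝ) (d : S → ℝ), IsPolicy π → IsVisit ι τ γ π d →
      (∀ k, V k ≤ (1 - γ)⁻¹ * DualObj τ (rk k) (fun s a => d s * π s a)) →
      DualObj τ r (fun s a => d s * π s a) ≤ DualObj τ r pStar) := by
  have hMDP' := hMDP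
  obtain ⟨⟨hsum, hvisit, hp0⟩, hFk⟩ := hFeas
  obtain ⟨hι, hιsum, hτ, hτsum, hγ0, hγ1⟩ := hMDP
  have h1γ : (0:ℝ) < 1 - γ := by linarith
  have hdpos : ∀ s, 0 < dStar s := by
    intro s
    rw [hvisit s]
    have h2 : 0 ≤ γ * ∑ s', ∑ a', pStar s' a' * τ s' a' s := by
      apply mul_nonneg hγ0
      apply Finset.sum_nonneg; intro s' _
      apply Finset.sum_nonneg; intro a' _
      exact mul_nonneg (hp0 s' a') (hτ s' a' s)
    have h3 := mul_pos h1γ (hι s)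
    linarith
  have hdne : ∀ s, dStar s ≠ 0 := fun s => (hdpos s).ne'
  refine ⟨hdpos, ⟨fun s a => div_nonneg (hp0 s a) (hdpos s).le,
    fun s => by rw [← Finset.sum_div, hsum s, div_self (hdne s)]⟩, ?_, ?_, ?_⟩
  · intro s
    calc dStar s = (1 - γ) * ι s + γ * ∑ s', ∑ a', pStar s' a' * τ s' a' s := hvisit s
      _ = _ := by
        congr 1; congr 1
        apply Finset.sum_congr rfl; intro s' _
        apply Finset.sum_congr rfl; intro a' _
        rw [mul_div_assoc', mul_comm (dStar s'), mul_div_assoc, div_self (hdne s'), mul_one]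
  · intro k
    have h := mul_le_mul_of_nonneg_left (hFk k) (inv_nonneg.mpr h1γ.le)
    rwa [← mul_assoc, inv_mul_cancel₀ h1γ.ne', one_mul] at h
  · intro π d hπ hd hν
    have dnn : ∀ s, 0 ≤ d s := visit_nonneg hMDP' hπ hd
    apply hOpt d (fun s a => d s * π s a)
    refine ⟨⟨?_, ?_, ?_⟩, ?_⟩
    · intro s; rw [← Finset.mul_sum, hπ.2 s, mul_one]
    · intro s; exact hd s
    · intro s a; exact mul_nonneg (dnn s) (hπ.1 s a)
    · intro k
      have h := mul_le_mul_of_nonneg_left (hν k) h1γ.le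
      rwa [← mul_assoc, mul_inv_cancel₀ h1γ.ne', one_mul] at h
end

section
/- Assume the constrained dual LP is feasible, and let (v*, q*, w*) be an optimal solution of the constrained primal LP. Then v* and q* satisfy the Bellman optimality equations for the modified reward r*_CRL(s,a,s') = r(s,a,s') + Σ_{k=1}^K w_k* r_k(s,a,s'): v*(s) = max_a Σ_{s'} τ(s'|s,a)(r*_CRL(s,a,s') + γ v*(s')) for all s and q*(s,a) = Σ_{s'} τ(s'|s,a)(r*_CRL(s,a,s') + γ v*(s')) for all s,a; hence v* and q* are the optimal value functions of the MDP with reward r*_CRL. -/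
open Finset

/-!
Fixing the multipliers at `wStar`, the constrained primal LP becomes the ordinary primal LP of
the MDP with reward `r + Σ_k wStar k • rk k`, whose objective `Σ_s ι(s)(1-γ)v(s)` has strictly
positive weights. If `vStar s` exceeded `max_a qStar s a` at some `s`, lowering `vStar` to that
maximum at `s` alone would keep the LP feasible (the Bellman backup is monotone) and strictly
decrease the objective. Hence `vStar` is a fixed point of the Bellman optimality operator, which is
a `γ`-contraction in the sup norm and so has no other fixed point.
-/

namespace Finite

variable {ι : Type*} [Finite ι] [Nonempty ι]

theorem ciSup_le_ciSup_add {f g : ι → ℝ} {c : ℝ} (h : ∀ i, f i ≤ g i + c) :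
    ⨆ i, f i ≤ (⨆ i, g i) + c :=
  ciSup_le fun i => (h i).trans (add_le_add_left (Finite.le_ciSup g i) c)

theorem abs_ciSup_sub_ciSup_le {f g : ι → ℝ} {c : ℝ} (h : ∀ i, |f i - g i| ≤ c) :
    |(⨆ i, f i) - ⨆ i, g i| ≤ c := by
  rw [abs_sub_le_iff]
  constructor
  · have := ciSup_le_ciSup_add fun i => sub_le_iff_le_add'.1 (abs_sub_le_iff.1 (h i)).1
    linarith
  · have := ciSup_le_ciSup_add fun i => sub_le_iff_le_add'.1 (abs_sub_le_iff.1 (h i)).2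
    linarith

end Finite

section Bellman

variable {S A : Type*} [Fintype S] (τ : S → A → S → ℝ) (γ : ℝ) (R : S → A → S → ℝ)

noncomputable def bellmanQ (v : S → ℝ) (s : S) (a : A) : ℝ :=
  ∑ s', τ s a s' * (R s a s' + γ * v s')

noncomputable def bellmanOptimalityOp [Fintype A] (v : S → ℝ) (s : S) : ℝ :=
  ⨆ a, bellmanQ τ γ R v s a

variable {τ γ}

theorem bellmanQ_sub (v v' : S → ℝ) (s : S) (a : A) :
    bellmanQ τ γ R v s a - bellmanQ τ γ R v' s a = γ * ∑ s', τ s a s' * (v s' - v' s') := by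
  simp only [bellmanQ, ← sum_sub_distrib, mul_sum]
  exact sum_congr rfl fun _ _ => by ring

theorem bellmanQ_mono (hτ : ∀ s a s', 0 ≤ τ s a s') (hγ : 0 ≤ γ) {v v' : S → ℝ} (h : v ≤ v')
    (s : S) (a : A) : bellmanQ τ γ R v s a ≤ bellmanQ τ γ R v' s a := by
  have : 0 ≤ bellmanQ τ γ R v' s a - bellmanQ τ γ R v s a := by
    rw [bellmanQ_sub]
    exact mul_nonneg hγ (sum_nonneg fun s' _ => mul_nonneg (hτ s a s') (sub_nonneg.2 (h s')))
  linarith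

theorem abs_bellmanQ_sub_le (hτ : ∀ s a s', 0 ≤ τ s a s') (hτ1 : ∀ s a, ∑ s', τ s a s' = 1)
    (hγ : 0 ≤ γ) {v v' : S → ℝ} {c : ℝ} (h : ∀ s, |v s - v' s| ≤ c) (s : S) (a : A) :
    |bellmanQ τ γ R v s a - bellmanQ τ γ R v' s a| ≤ γ * c := by
  rw [bellmanQ_sub, abs_mul, abs_of_nonneg hγ]
  refine mul_le_mul_of_nonneg_left ?_ hγ
  calc |∑ s', τ s a s' * (v s' - v' s')|
      ≤ ∑ s', τ s a s' * |v s' - v' s'| := by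
        refine (abs_sum_le_sum_abs _ _).trans_eq (sum_congr rfl fun s' _ => ?_)
        rw [abs_mul, abs_of_nonneg (hτ s a s')]
    _ ≤ ∑ s', τ s a s' * c := sum_le_sum fun s' _ => mul_le_mul_of_nonneg_left (h s') (hτ s a s')
    _ = c := by rw [← sum_mul, hτ1, one_mul]

theorem contractingWith_bellmanOptimalityOp [Fintype A] [Nonempty A]
    (hτ : ∀ s a s', 0 ≤ τ s a s') (hτ1 : ∀ s a, ∑ s', τ s a s' = 1) (hγ0 : 0 ≤ γ) (hγ1 : γ < 1) :
    ContractingWith ⟨γ, hγ0⟩ (bellmanOptimalityOp τ γ R) := by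
  refine ⟨hγ1, LipschitzWith.of_dist_le_mul fun v v' => ?_⟩
  refine (dist_pi_le_iff (by positivity)).2 fun s => ?_
  rw [Real.dist_eq]
  refine Finite.abs_ciSup_sub_ciSup_le fun a =>
    abs_bellmanQ_sub_le R hτ hτ1 hγ0 (fun s' => ?_) s a
  rw [← Real.dist_eq]
  exact dist_le_pi_dist v v' s'

theorem bellmanOptimalityOp_eq_self_of_primal_optimal [Fintype A] [Nonempty A]
    (hτ : ∀ s a s', 0 ≤ τ s a s') (hγ : 0 ≤ γ) {μ : S → ℝ} (hμ : ∀ s, 0 < μ s) {v : S → ℝ}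
    (hv : ∀ s a, bellmanQ τ γ R v s a ≤ v s)
    (hmin : ∀ v' : S → ℝ, (∀ s a, bellmanQ τ γ R v' s a ≤ v' s) →
      ∑ s, μ s * v s ≤ ∑ s, μ s * v' s) :
    bellmanOptimalityOp τ γ R v = v := by
  classical
  funext s
  refine le_antisymm (ciSup_le (hv s)) (not_lt.1 fun hlt => ?_)
  set v' := Function.update v s (bellmanOptimalityOp τ γ R v s)
  have hv'le : v' ≤ v := update_le_self_iff.2 hlt.le
  have hv' : ∀ s₀ a, bellmanQ τ γ R v' s₀ a ≤ v' s₀ := by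
    intro s₀ a
    refine (bellmanQ_mono R hτ hγ hv'le s₀ a).trans ?_
    rcases eq_or_ne s₀ s with rfl | hne
    · simp only [v', Function.update_self]
      exact Finite.le_ciSup (bellmanQ τ γ R v s₀) a
    · simpa [v', hne] using hv s₀ a
  have hsum : ∑ s, μ s * v' s < ∑ s, μ s * v s :=
    sum_lt_sum (fun t _ => mul_le_mul_of_nonneg_left (hv'le t) (hμ t).le)
      ⟨s, mem_univ s, mul_lt_mul_of_pos_left (by simpa [v'] using hlt) (hμ s)⟩
  exact (hmin v' hv').not_gt hsum

end Bellman

theorem crl_primal_bellman_optimality_general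
    {S A : Type*} [Fintype S] [Fintype A] [Nonempty A]
    (ι : S → ℝ) (τ : S → A → S → ℝ) (γ : ℝ) (r : S → A → S → ℝ)
    (hMDP : IsMDP ι τ γ)
    {K : ℕ} (rk : Fin K → S → A → S → ℝ) (V : Fin K → ℝ)
    (vStar : S → ℝ) (qStar : S → A → ℝ) (wStar : Fin K → ℝ)
    (hFeas : (∀ s a, qStar s a ≤ vStar s) ∧
      (∀ s a, qStar s a = ∑ s', τ s a s' *
        (r s a s' + (∑ k, wStar k * rk k s a s') + γ * vStar s')) ∧
      ∀ k, 0 ≤ wStar k)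
    (hOpt : ∀ (v : S → ℝ) (q : S → A → ℝ) (w : Fin K → ℝ),
      ((∀ s a, q s a ≤ v s) ∧
        (∀ s a, q s a = ∑ s', τ s a s' *
          (r s a s' + (∑ k, w k * rk k s a s') + γ * v s')) ∧
        ∀ k, 0 ≤ w k) →
      (∑ s, ι s * ((1 - γ) * vStar s)) - ∑ k, wStar k * ((1 - γ) * V k) ≤
        (∑ s, ι s * ((1 - γ) * v s)) - ∑ k, w k * ((1 - γ) * V k)) :
    (∀ s, vStar s = ⨆ a, ∑ s', τ s a s' *
      ((r s a s' + ∑ k, wStar k * rk k s a s') + γ * vStar s')) ∧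
    (∀ s a, qStar s a = ∑ s', τ s a s' *
      ((r s a s' + ∑ k, wStar k * rk k s a s') + γ * vStar s')) ∧
    (∀ v : S → ℝ,
      (∀ s, v s = ⨆ a, ∑ s', τ s a s' *
        ((r s a s' + ∑ k, wStar k * rk k s a s') + γ * v s')) → v = vStar) := by
  obtain ⟨hι, -, hτ, hτ1, hγ0, hγ1⟩ := hMDP
  obtain ⟨hle, hq, hw⟩ := hFeas
  let R : S → A → S → ℝ := fun s a s' => r s a s' + ∑ k, wStar k * rk k s a s'
  have hfix : bellmanOptimalityOp τ γ R vStar = vStar := by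
    refine bellmanOptimalityOp_eq_self_of_primal_optimal R hτ hγ0
      (μ := fun s => ι s * (1 - γ)) (fun s => mul_pos (hι s) (by linarith))
      (fun s a => (hq s a).symm.trans_le (hle s a)) fun v hv => ?_
    have := hOpt v (bellmanQ τ γ R v) wStar ⟨hv, fun _ _ => rfl, hw⟩
    simp only [mul_assoc]
    linarith
  refine ⟨fun s => (congrFun hfix s).symm, hq, fun v hv => ?_⟩
  exact (contractingWith_bellmanOptimalityOp R hτ hτ1 hγ0 hγ1).fixedPoint_unique'
    (funext fun s => (hv s).symm) hfix

/-- if the constrained dual LP is feasible, then an optimal solution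
`(v*, q*, w*)` of the constrained primal LP satisfies the Bellman optimality equations
for the modified reward `r*_CRL = r + Σ_k w_k* r_k`, and hence `v*`, `q*` are the optimal
value functions of the MDP with reward `r*_CRL` (the unique Bellman-optimal solutions). -/
theorem crl_primal_bellman_optimality
    {S A : Type*} [Fintype S] [Fintype A] [Nonempty S] [Nonempty A]
    (ι : S → ℝ) (τ : S → A → S → ℝ) (γ : ℝ) (r : S → A → S → ℝ)
    (hMDP : IsMDP ι τ γ)
    {K : ℕ} (rk : Fin K → S → A → S → ℝ) (V : Fin K → ℝ)
    (hDualFeas : ∃ (d : S → ℝ) (p : S → A → ℝ), DualFeas ι τ γ d p ∧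
      ∀ k, (1 - γ) * V k ≤ DualObj τ (rk k) p)
    (vStar : S → ℝ) (qStar : S → A → ℝ) (wStar : Fin K → ℝ)
    (hFeas : (∀ s a, qStar s a ≤ vStar s) ∧
      (∀ s a, qStar s a = ∑ s', τ s a s' *
        (r s a s' + (∑ k, wStar k * rk k s a s') + γ * vStar s')) ∧
      ∀ k, 0 ≤ wStar k)
    (hOpt : ∀ (v : S → ℝ) (q : S → A → ℝ) (w : Fin K → ℝ),
      ((∀ s a, q s a ≤ v s) ∧
        (∀ s a, q s a = ∑ s', τ s a s' *
          (r s a s' + (∑ k, w k * rk k s a s') + γ * v s')) ∧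
        ∀ k, 0 ≤ w k) →
      (∑ s, ι s * ((1 - γ) * vStar s)) - ∑ k, wStar k * ((1 - γ) * V k) ≤
        (∑ s, ι s * ((1 - γ) * v s)) - ∑ k, w k * ((1 - γ) * V k)) :
    (∀ s, vStar s = ⨆ a, ∑ s', τ s a s' *
      ((r s a s' + ∑ k, wStar k * rk k s a s') + γ * vStar s')) ∧
    (∀ s a, qStar s a = ∑ s', τ s a s' *
      ((r s a s' + ∑ k, wStar k * rk k s a s') + γ * vStar s')) ∧
    (∀ v : S → ℝ,
      (∀ s, v s = ⨆ a, ∑ s', τ s a s' *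
        ((r s a s' + ∑ k, wStar k * rk k s a s') + γ * v s')) → v = vStar) :=
  crl_primal_bellman_optimality_general ι τ γ r hMDP rk V vStar qStar wStar hFeas hOpt
end

section
/- Assume the constrained dual LP is feasible. Let (d*, p*) be an optimal solution of the constrained dual LP with derived policy π*(a|s) = p*(s,a)/d*(s), and let (v*, q*, w*) be an optimal solution of the constrained primal LP. Then for every k with ν_k^{π*} > V_k (a strictly satisfied constraint), the optimal multiplier satisfies w_k* = 0; that is, the optimal modified reward r*_CRL = r + Σ_k w_k* r_k is only altered by the tight constraints ν_k^{π*} = V_k. -/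
open Finset

/-!
Weak duality for the pair of LPs, applied to `p*` and `(v*, w*)`, gives
`⟨r, p*⟩ + Σ_k w*_k ⟨r_k, p*⟩ ≤ (1-γ) Σ_s ι(s) v*(s)`, while strong duality bounds the primal
optimum `(1-γ) Σ_s ι(s) v*(s) - Σ_k w*_k (1-γ) V_k` by the dual optimum `⟨r, p*⟩`. Together
`Σ_k w*_k (⟨r_k, p*⟩ - (1-γ) V_k) ≤ 0`, a sum of nonnegative terms, so every term vanishes.
Strong duality comes from Farkas' lemma, proved by Fourier–Motzkin elimination.
-/

open Matrix

section Farkas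

variable {m ι : Type*} [Fintype m]

theorem exists_nonneg_sum_smul_eq_or_exists_dotProduct_neg (T : Finset ι) (g : ι → m → ℝ)
    (b : m → ℝ) :
    (∃ x : ι → ℝ, 0 ≤ x ∧ ∑ i ∈ T, x i • g i = b) ∨
      ∃ y, (∀ i ∈ T, 0 ≤ g i ⬝ᵥ y) ∧ b ⬝ᵥ y < 0 := by
  classical
  induction T using Finset.induction_on generalizing g b with
  | empty =>
    by_cases hb : b = 0
    · exact .inl ⟨0, le_rfl, by simp [hb]⟩
    · exact .inr ⟨-b, by simp, by simpa using dotProduct_self_star_pos_iff.2 hb⟩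
  | @insert a T ha IH =>
    have sum_update (x : ι → ℝ) (c : ℝ) :
        ∑ i ∈ insert a T, Function.update x a c i • g i = c • g a + ∑ i ∈ T, x i • g i := by
      rw [sum_insert ha, Function.update_self]
      congr 1
      exact sum_congr rfl fun i hi => by rw [Function.update_of_ne (ne_of_mem_of_not_mem hi ha)]
    have update_nonneg {x : ι → ℝ} {c : ℝ} (hx : 0 ≤ x) (hc : 0 ≤ c) :
        0 ≤ Function.update x a c := fun i => by
      rcases eq_or_ne i a with rfl | hi
      · simpa using hc
      · simpa [hi] using hx i
    obtain ⟨x, hx, hxb⟩ | ⟨y, hy, hby⟩ := IH g b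
    · exact .inl ⟨Function.update x a 0, update_nonneg hx le_rfl, by simp [sum_update, hxb]⟩
    by_cases hay : 0 ≤ g a ⬝ᵥ y
    · exact .inr ⟨y, by simpa [hay] using hy, hby⟩
    push Not at hay
    set α := g a ⬝ᵥ y
    -- eliminate `g a` by projecting along it onto the hyperplane `y⊥`, which it is transversal to
    let proj : (m → ℝ) → m → ℝ := fun v => v - (v ⬝ᵥ y / α) • g a
    have proj_dotProduct (v z : m → ℝ) : proj v ⬝ᵥ z = v ⬝ᵥ z - v ⬝ᵥ y / α * g a ⬝ᵥ z := by
      simp [proj, sub_dotProduct]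
    obtain ⟨x, hx, hxb⟩ | ⟨z, hz, hbz⟩ := IH (fun i => proj (g i)) (proj b)
    · set c := b ⬝ᵥ y / α - ∑ i ∈ T, x i * (g i ⬝ᵥ y / α)
      have hc : 0 < c := by
        have hb : 0 < b ⬝ᵥ y / α := div_pos_of_neg_of_neg hby hay
        have hg : ∑ i ∈ T, x i * (g i ⬝ᵥ y / α) ≤ 0 :=
          sum_nonpos fun i hi => mul_nonpos_of_nonneg_of_nonpos (hx i)
            (div_nonpos_of_nonneg_of_nonpos (hy i hi) hay.le)
        linarith
      refine .inl ⟨Function.update x a c, update_nonneg hx hc.le, ?_⟩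
      have hxb' : ∑ i ∈ T, x i • g i - (∑ i ∈ T, x i * (g i ⬝ᵥ y / α)) • g a =
          b - (b ⬝ᵥ y / α) • g a := by
        change _ = proj b
        rw [← hxb, sum_smul, ← sum_sub_distrib]
        exact sum_congr rfl fun i _ => by simp only [proj, smul_sub, smul_smul]
      rw [sum_update]
      linear_combination (norm := module) hxb'
    · have dotProduct_shift (v : m → ℝ) : v ⬝ᵥ (z - (g a ⬝ᵥ z / α) • y) = proj v ⬝ᵥ z := by
        rw [proj_dotProduct, dotProduct_sub, dotProduct_smul, smul_eq_mul]
        ring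
      refine .inr ⟨z - (g a ⬝ᵥ z / α) • y, fun i hi => ?_, by rwa [dotProduct_shift]⟩
      rw [dotProduct_shift]
      rcases mem_insert.mp hi with rfl | hi
      · rw [proj_dotProduct, div_self hay.ne, one_mul, sub_self]
      · exact hz i hi

theorem exists_le_mulVec_or_exists_vecMul_eq_zero [Fintype ι] (M : Matrix ι m ℝ) (h : ι → ℝ) :
    (∃ y, h ≤ M *ᵥ y) ∨ ∃ x, 0 ≤ x ∧ x ᵥ* M = 0 ∧ 0 < x ⬝ᵥ h := by
  -- homogenize: `h i ≤ M i ⬝ᵥ y` becomes `0 ≤ -h i * t + M i ⬝ᵥ y` with an extra coordinate `t > 0`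
  have dotProduct_option (u v : Option m → ℝ) :
      u ⬝ᵥ v = u none * v none + (u ∘ some) ⬝ᵥ (v ∘ some) := by
    simp [dotProduct, Fintype.sum_option]
  obtain ⟨x, hx, hxb⟩ | ⟨y, hy, hby⟩ := exists_nonneg_sum_smul_eq_or_exists_dotProduct_neg univ
    (fun i (o : Option m) => o.elim (-h i) (M i)) (fun o : Option m => o.elim (-1) 0)
  · refine .inr ⟨x, hx, funext fun j => ?_, ?_⟩
    · simpa [vecMul, dotProduct] using congr_fun hxb (some j)
    · have hxh := congr_fun hxb none
      simp only [Finset.sum_apply, Pi.smul_apply, Option.elim_none, smul_eq_mul, mul_neg,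
        sum_neg_distrib, neg_inj] at hxh
      simp [dotProduct, hxh]
  · have ht : 0 < y none := by simpa [dotProduct_option, Function.comp_def] using hby
    refine .inl ⟨(y none)⁻¹ • (y ∘ some), fun i => ?_⟩
    have hi : 0 ≤ -h i * y none + M i ⬝ᵥ (y ∘ some) := by
      simpa [dotProduct_option, Function.comp_def] using hy i (mem_univ i)
    rw [mulVec_smul, Pi.smul_apply, smul_eq_mul, le_inv_mul_iff₀ ht]
    simp only [mulVec]
    linarith

end Farkas

/- The LP pair: maximize `c ⬝ᵥ x` over `MaxFeasible A b G h x`, and minimize `b ⬝ᵥ y - h ⬝ᵥ w`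
over `MinFeasible A G c y w`. -/
namespace LP

variable {m n κ : Type*} [Fintype m] [Fintype n] [Fintype κ]

def MaxFeasible (A : Matrix m n ℝ) (b : m → ℝ) (G : Matrix κ n ℝ) (h : κ → ℝ) (x : n → ℝ) :
    Prop :=
  0 ≤ x ∧ A *ᵥ x = b ∧ h ≤ G *ᵥ x

def MinFeasible (A : Matrix m n ℝ) (G : Matrix κ n ℝ) (c : n → ℝ) (y : m → ℝ) (w : κ → ℝ) :
    Prop :=
  0 ≤ w ∧ c ≤ y ᵥ* A - w ᵥ* G

variable {A : Matrix m n ℝ} {b : m → ℝ} {G : Matrix κ n ℝ} {h : κ → ℝ} {c : n → ℝ}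

theorem weak_duality {x : n → ℝ} {y : m → ℝ} {w : κ → ℝ} (hx : 0 ≤ x) (hAx : A *ᵥ x = b)
    (hyw : MinFeasible A G c y w) : c ⬝ᵥ x + w ⬝ᵥ (G *ᵥ x) ≤ b ⬝ᵥ y := by
  have hle := dotProduct_le_dotProduct_of_nonneg_right hyw.2 hx
  rw [sub_dotProduct, ← dotProduct_mulVec, ← dotProduct_mulVec, hAx, dotProduct_comm y] at hle
  linarith

theorem strong_duality {xStar : n → ℝ} (hxStar : MaxFeasible A b G h xStar)
    (hopt : ∀ x, MaxFeasible A b G h x → c ⬝ᵥ x ≤ c ⬝ᵥ xStar) :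
    ∃ y w, MinFeasible A G c y w ∧ b ⬝ᵥ y - h ⬝ᵥ w ≤ c ⬝ᵥ xStar := by
  classical
  -- Farkas' alternative for `c ≤ y ᵥ* A - w ᵥ* G`, `0 ≤ w`, `-(b ⬝ᵥ y - h ⬝ᵥ w) ≥ -(c ⬝ᵥ xStar)`
  obtain ⟨z, hz⟩ | ⟨l, hl, hlM, hlH⟩ := exists_le_mulVec_or_exists_vecMul_eq_zero
    (fromRows (fromCols Aᵀ (-Gᵀ))
      (fromRows (fromCols 0 (1 : Matrix κ κ ℝ)) (replicateRow Unit (Sum.elim (-b) h))))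
    (Sum.elim c (Sum.elim 0 fun _ => -(c ⬝ᵥ xStar)))
  · obtain ⟨y, w, rfl⟩ : ∃ y w, z = Sum.elim y w := ⟨_, _, (Sum.elim_comp_inl_inr z).symm⟩
    simp only [fromRows_mulVec, fromCols_mulVec_sumElim, Sum.elim_le_elim_iff, mulVec_transpose,
      neg_mulVec, zero_mulVec, one_mulVec, zero_add, replicateRow_mulVec_eq_const,
      sumElim_dotProduct_sumElim, neg_dotProduct, ← sub_eq_add_neg] at hz
    obtain ⟨hc, hw, hobj⟩ := hz
    exact ⟨y, w, ⟨hw, hc⟩, by linarith [show -(c ⬝ᵥ xStar) ≤ -(b ⬝ᵥ y) + h ⬝ᵥ w from hobj ()]⟩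
  · obtain ⟨x, μ, t, rfl⟩ : ∃ x μ t, l = Sum.elim x (Sum.elim μ fun _ => t) :=
      ⟨_, _, l (.inr (.inr ())), by ext (_ | _ | _) <;> rfl⟩
    have hx : 0 ≤ x := fun j => hl (.inl j)
    have hμ : 0 ≤ μ := fun k => hl (.inr (.inl k))
    have ht : 0 ≤ t := hl (.inr (.inr ()))
    have hobj : t * (c ⬝ᵥ xStar) < c ⬝ᵥ x := by
      simpa [sumElim_dotProduct_sumElim, dotProduct_comm x] using hlH
    have hrow :
        (fun _ : Unit => t) ᵥ* replicateRow Unit (Sum.elim (-b) h) = t • Sum.elim (-b) h := by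
      ext
      simp [vecMul, dotProduct]
    rw [sumElim_vecMul_fromRows, sumElim_vecMul_fromRows, vecMul_fromCols, vecMul_fromCols,
      vecMul_transpose, vecMul_neg, vecMul_transpose, vecMul_zero, vecMul_one, hrow] at hlM
    have hAx : A *ᵥ x = t • b := funext fun i => by
      simpa [add_neg_eq_zero] using congr_fun hlM (.inl i)
    have hGx : G *ᵥ x = μ + t • h := funext fun k => by
      simpa [neg_add_eq_zero] using congr_fun hlM (.inr k)
    -- the certificate makes `(xStar + x) / (1 + t)` a feasible point better than `xStar`
    have hfeas : MaxFeasible A b G h ((1 + t)⁻¹ • (xStar + x)) := by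
      refine ⟨smul_nonneg (by positivity) (add_nonneg hxStar.1 hx), ?_, fun k => ?_⟩
      · rw [mulVec_smul, mulVec_add, hxStar.2.1, hAx,
          show b + t • b = (1 + t) • b by module, inv_smul_smul₀ (by positivity)]
      · rw [mulVec_smul, mulVec_add, hGx, Pi.smul_apply, smul_eq_mul,
          le_inv_mul_iff₀ (by positivity)]
        simp only [Pi.add_apply, Pi.smul_apply, smul_eq_mul]
        linarith [hxStar.2.2 k, show 0 ≤ μ k from hμ k]
    have hle := hopt _ hfeas
    rw [dotProduct_smul, dotProduct_add, smul_eq_mul, inv_mul_le_iff₀ (by positivity)] at hle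
    linarith

theorem complementary_slackness {xStar : n → ℝ} {yStar : m → ℝ} {wStar : κ → ℝ}
    (hxStar : MaxFeasible A b G h xStar)
    (hxopt : ∀ x, MaxFeasible A b G h x → c ⬝ᵥ x ≤ c ⬝ᵥ xStar)
    (hywStar : MinFeasible A G c yStar wStar)
    (hywopt : ∀ y w, MinFeasible A G c y w → b ⬝ᵥ yStar - h ⬝ᵥ wStar ≤ b ⬝ᵥ y - h ⬝ᵥ w)
    {k : κ} (hk : h k < (G *ᵥ xStar) k) : wStar k = 0 := by
  obtain ⟨y, w, hyw, hle⟩ := strong_duality hxStar hxopt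
  have hweak := weak_duality hxStar.1 hxStar.2.1 hywStar
  have hslack : wStar ⬝ᵥ (G *ᵥ xStar - h) ≤ 0 := by
    rw [dotProduct_sub, dotProduct_comm wStar h]
    linarith [hywopt y w hyw]
  have hterms : ∀ i ∈ univ, 0 ≤ wStar i * (G *ᵥ xStar - h) i := fun i _ =>
    mul_nonneg (hywStar.1 i) (sub_nonneg.2 (hxStar.2.2 i))
  have hk0 := (sum_eq_zero_iff_of_nonneg hterms).1 (le_antisymm hslack (sum_nonneg hterms)) k
    (mem_univ k)
  exact (mul_eq_zero.1 hk0).resolve_right (sub_ne_zero.2 hk.ne')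

end LP

/- The constrained dual LP is the `max` problem above for `x = uncurry p`, `A = flowMatrix τ γ`,
`b = (1-γ) ι`, `G = constraintMatrix τ rk`, `h = (1-γ) V` and `c = expectedReward τ r`
(`d = Σ_a p(·, a)` is eliminated); the constrained primal LP is the `min` problem with `y = v`. -/
section MDP

variable {S A κ : Type*} {ι : S → ℝ} {τ : S → A → S → ℝ} {γ : ℝ} {r : S → A → S → ℝ}
  {rk : κ → S → A → S → ℝ}

variable (τ) in
def expectedReward [Fintype S] (r : S → A → S → ℝ) (sa : S × A) : ℝ :=
  ∑ s', τ sa.1 sa.2 s' * r sa.1 sa.2 s'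

variable (τ γ) in
def flowMatrix [DecidableEq S] : Matrix S (S × A) ℝ :=
  of fun s sa => (if sa.1 = s then 1 else 0) - γ * τ sa.1 sa.2 s

variable (τ rk) in
def constraintMatrix [Fintype S] : Matrix κ (S × A) ℝ :=
  of fun k => expectedReward τ (rk k)

section

variable [Fintype S]

theorem vecMul_flowMatrix [DecidableEq S] (v : S → ℝ) (s : S) (a : A) :
    (v ᵥ* flowMatrix τ γ) (s, a) = v s - γ * ∑ s', τ s a s' * v s' := by
  simp [flowMatrix, vecMul, dotProduct, mul_sub, mul_sum, mul_left_comm, mul_comm]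

theorem vecMul_constraintMatrix [Fintype κ] (w : κ → ℝ) (s : S) (a : A) :
    (w ᵥ* constraintMatrix τ rk) (s, a) = ∑ k, w k * ∑ s', τ s a s' * rk k s a s' := rfl

theorem sum_transition_mul_eq_expectedReward_add [Fintype κ] (v : S → ℝ) (w : κ → ℝ) (s : S)
    (a : A) :
    ∑ s', τ s a s' * (r s a s' + (∑ k, w k * rk k s a s') + γ * v s') =
      expectedReward τ r (s, a) + (w ᵥ* constraintMatrix τ rk) (s, a) +
        γ * ∑ s', τ s a s' * v s' := by
  rw [vecMul_constraintMatrix, expectedReward]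
  simp only [mul_add, sum_add_distrib, mul_sum]
  rw [sum_comm (γ := κ)]
  congr 1
  · congr 1
    exact sum_congr rfl fun _ _ => sum_congr rfl fun _ _ => by ring
  · exact sum_congr rfl fun _ _ => by ring

theorem minFeasible_iff [Fintype κ] [DecidableEq S] {v : S → ℝ} {w : κ → ℝ} {q : S → A → ℝ}
    (hq : ∀ s a, q s a = ∑ s', τ s a s' * (r s a s' + (∑ k, w k * rk k s a s') + γ * v s')) :
    LP.MinFeasible (flowMatrix τ γ) (constraintMatrix τ rk) (expectedReward τ r) v w ↔
      (∀ s a, q s a ≤ v s) ∧ ∀ k, 0 ≤ w k := by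
  simp only [LP.MinFeasible, Pi.le_def, Prod.forall, Pi.sub_apply, vecMul_flowMatrix, hq,
    sum_transition_mul_eq_expectedReward_add, Pi.zero_apply]
  constructor
  · rintro ⟨hw, hc⟩
    exact ⟨fun s a => by linarith [hc s a], hw⟩
  · rintro ⟨hc, hw⟩
    exact ⟨hw, fun s a => by linarith [hc s a]⟩

theorem primal_objective_eq_dotProduct [Fintype κ] (V : κ → ℝ) (v : S → ℝ) (w : κ → ℝ) :
    (∑ s, ι s * ((1 - γ) * v s)) - ∑ k, w k * ((1 - γ) * V k) =
      ((1 - γ) • ι) ⬝ᵥ v - ((1 - γ) • V) ⬝ᵥ w := by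
  simp only [dotProduct, Pi.smul_apply, smul_eq_mul]
  congr 1 <;> exact sum_congr rfl fun _ _ => by ring

end

variable [Fintype S] [Fintype A]

theorem dualObj_eq_dotProduct (p : S → A → ℝ) :
    DualObj τ r p = expectedReward τ r ⬝ᵥ Function.uncurry p := by
  simp [DualObj, expectedReward, dotProduct, Fintype.sum_prod_type, mul_comm]

theorem flowMatrix_mulVec [DecidableEq S] (p : S → A → ℝ) (s : S) :
    (flowMatrix τ γ *ᵥ Function.uncurry p) s =
      ∑ a, p s a - γ * ∑ s', ∑ a', p s' a' * τ s' a' s := by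
  simp only [flowMatrix, mulVec, dotProduct, of_apply, Fintype.sum_prod_type,
    Function.uncurry_apply_pair, sub_mul, sum_sub_distrib, ite_mul, one_mul, zero_mul, mul_sum]
  congr 1
  · rw [Fintype.sum_eq_single s fun s' hs' => by simp [hs']]
    simp
  · exact sum_congr rfl fun _ _ => sum_congr rfl fun _ _ => by ring

theorem constraintMatrix_mulVec (p : S → A → ℝ) (k : κ) :
    (constraintMatrix τ rk *ᵥ Function.uncurry p) k = DualObj τ (rk k) p := by
  rw [dualObj_eq_dotProduct]
  rfl

theorem dualFeas_and_iff_maxFeasible [DecidableEq S] {V : κ → ℝ} {d : S → ℝ} {p : S → A → ℝ} :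
    (DualFeas ι τ γ d p ∧ ∀ k, (1 - γ) * V k ≤ DualObj τ (rk k) p) ↔
      (∀ s, ∑ a, p s a = d s) ∧ LP.MaxFeasible (flowMatrix τ γ) ((1 - γ) • ι)
        (constraintMatrix τ rk) ((1 - γ) • V) (Function.uncurry p) := by
  simp only [DualFeas, LP.MaxFeasible, funext_iff, Pi.le_def, flowMatrix_mulVec,
    constraintMatrix_mulVec, Pi.smul_apply, smul_eq_mul, Prod.forall, Function.uncurry_apply_pair,
    Pi.zero_apply]
  constructor
  · rintro ⟨⟨hd, hflow, hp⟩, hV⟩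
    exact ⟨hd, hp, fun s => by linarith [hd s, hflow s], hV⟩
  · rintro ⟨hd, hp, hflow, hV⟩
    exact ⟨⟨hd, fun s => by linarith [hd s, hflow s], hp⟩, hV⟩

end MDP

theorem crl_complementary_slackness_general
    {S A : Type*} [Fintype S] [Fintype A]
    (ι : S → ℝ) (τ : S → A → S → ℝ) (γ : ℝ) (r : S → A → S → ℝ)
    (hMDP : IsMDP ι τ γ)
    {K : ℕ} (rk : Fin K → S → A → S → ℝ) (V : Fin K → ℝ)
    (dStar : S → ℝ) (pStar : S → A → ℝ)
    (hDFeas : DualFeas ι τ γ dStar pStar ∧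
      ∀ k, (1 - γ) * V k ≤ DualObj τ (rk k) pStar)
    (hDOpt : ∀ (d : S → ℝ) (p : S → A → ℝ),
      (DualFeas ι τ γ d p ∧ ∀ k, (1 - γ) * V k ≤ DualObj τ (rk k) p) →
      DualObj τ r p ≤ DualObj τ r pStar)
    (vStar : S → ℝ) (qStar : S → A → ℝ) (wStar : Fin K → ℝ)
    (hPFeas : (∀ s a, qStar s a ≤ vStar s) ∧
      (∀ s a, qStar s a = ∑ s', τ s a s' *
        (r s a s' + (∑ k, wStar k * rk k s a s') + γ * vStar s')) ∧
      ∀ k, 0 ≤ wStar k)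
    (hPOpt : ∀ (v : S → ℝ) (q : S → A → ℝ) (w : Fin K → ℝ),
      ((∀ s a, q s a ≤ v s) ∧
        (∀ s a, q s a = ∑ s', τ s a s' *
          (r s a s' + (∑ k, w k * rk k s a s') + γ * v s')) ∧
        ∀ k, 0 ≤ w k) →
      (∑ s, ι s * ((1 - γ) * vStar s)) - ∑ k, wStar k * ((1 - γ) * V k) ≤
        (∑ s, ι s * ((1 - γ) * v s)) - ∑ k, w k * ((1 - γ) * V k)) :
    ∀ k, V k < (1 - γ)⁻¹ * DualObj τ (rk k) pStar → wStar k = 0 := by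
  classical
  have hγ : 0 < 1 - γ := sub_pos.2 hMDP.2.2.2.2.2
  intro k hk
  refine LP.complementary_slackness (xStar := Function.uncurry pStar) (yStar := vStar)
    (dualFeas_and_iff_maxFeasible.1 hDFeas).2 (fun x hx => ?_)
    ((minFeasible_iff hPFeas.2.1).2 ⟨hPFeas.1, hPFeas.2.2⟩) (fun y w hyw => ?_) ?_
  · have hle := hDOpt _ (Function.curry x)
      (dualFeas_and_iff_maxFeasible.2 ⟨fun _ => rfl, by rwa [Function.uncurry_curry]⟩)
    rwa [dualObj_eq_dotProduct, dualObj_eq_dotProduct, Function.uncurry_curry] at hle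
  · obtain ⟨hq, hw⟩ := (minFeasible_iff fun _ _ => rfl).1 hyw
    simpa only [primal_objective_eq_dotProduct] using hPOpt y _ w ⟨hq, fun _ _ => rfl, hw⟩
  · rw [constraintMatrix_mulVec, Pi.smul_apply, smul_eq_mul]
    rwa [lt_inv_mul_iff₀ hγ] at hk

/-- given optimal solutions of the (feasible) constrained dual and primal
LPs, every strictly satisfied constraint `ν_k^{π*} > V_k` has optimal multiplier
`w_k* = 0`; the optimal modified reward is only altered by tight constraints. -/
theorem crl_complementary_slackness
    {S A : Type*} [Fintype S] [Fintype A] [Nonempty S] [Nonempty A]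
    (ι : S → ℝ) (τ : S → A → S → ℝ) (γ : ℝ) (r : S → A → S → ℝ)
    (hMDP : IsMDP ι τ γ)
    {K : ℕ} (rk : Fin K → S → A → S → ℝ) (V : Fin K → ℝ)
    (dStar : S → ℝ) (pStar : S → A → ℝ)
    (hDFeas : DualFeas ι τ γ dStar pStar ∧
      ∀ k, (1 - γ) * V k ≤ DualObj τ (rk k) pStar)
    (hDOpt : ∀ (d : S → ℝ) (p : S → A → ℝ),
      (DualFeas ι τ γ d p ∧ ∀ k, (1 - γ) * V k ≤ DualObj τ (rk k) p) →
      DualObj τ r p ≤ DualObj τ r pStar)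
    (vStar : S → ℝ) (qStar : S → A → ℝ) (wStar : Fin K → ℝ)
    (hPFeas : (∀ s a, qStar s a ≤ vStar s) ∧
      (∀ s a, qStar s a = ∑ s', τ s a s' *
        (r s a s' + (∑ k, wStar k * rk k s a s') + γ * vStar s')) ∧
      ∀ k, 0 ≤ wStar k)
    (hPOpt : ∀ (v : S → ℝ) (q : S → A → ℝ) (w : Fin K → ℝ),
      ((∀ s a, q s a ≤ v s) ∧
        (∀ s a, q s a = ∑ s', τ s a s' *
          (r s a s' + (∑ k, w k * rk k s a s') + γ * v s')) ∧
        ∀ k, 0 ≤ w k) →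
      (∑ s, ι s * ((1 - γ) * vStar s)) - ∑ k, wStar k * ((1 - γ) * V k) ≤
        (∑ s, ι s * ((1 - γ) * v s)) - ∑ k, w k * ((1 - γ) * V k)) :
    ∀ k, V k < (1 - γ)⁻¹ * DualObj τ (rk k) pStar → wStar k = 0 :=
  crl_complementary_slackness_general ι τ γ r hMDP rk V dStar pStar hDFeas hDOpt vStar qStar wStar
    hPFeas hPOpt
end

section
/- Let π be a policy satisfying the visitation density bounds p_lb(s,a) ≤ p^π(s,a) ≤ p_ub(s,a) for all s,a, and let (v*, q*, r_lb*, r_ub*) be an optimal solution of the bounded policy-evaluation primal LP for π. Then v* and q* satisfy the Bellman equation of π for the modified reward r*_VDB(s,a,s') = r(s,a,s') + r_lb*(s,a) − r_ub*(s,a): v*(s) = Σ_a π(a|s) Σ_{s'} τ(s'|s,a)(r*_VDB(s,a,s') + γ v*(s')) for all s and q*(s,a) = Σ_{s'} τ(s'|s,a)(r*_VDB(s,a,s') + γ v*(s')) for all s,a; hence v* and q* are the value functions of π for the reward r*_VDB. -/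
open Finset

/-- if the policy `π` satisfies the visitation density bounds, then an
optimal solution `(v*, q*, r_lb*, r_ub*)` of the bounded policy-evaluation primal LP for
`π` satisfies the Bellman equation of `π` for the modified reward
`r*_VDB = r + r_lb* − r_ub*`, and hence equals the value functions of `π` for `r*_VDB`. -/
theorem vdb_primal_bellman
    {S A : Type*} [Fintype S] [Fintype A] [Nonempty S] [Nonempty A]
    (ι : S → ℝ) (τ : S → A → S → ℝ) (γ : ℝ) (r : S → A → S → ℝ)
    (hMDP : IsMDP ι τ γ)
    (plb pub : S → A → ℝ) (hb0 : ∀ s a, 0 ≤ plb s a) (hb1 : ∀ s a, plb s a ≤ pub s a)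
    (π : S → A → ℝ) (hPol : IsPolicy π)
    (dπ : S → ℝ) (hVisit : IsVisit ι τ γ π dπ)
    (hSat : ∀ s a, plb s a ≤ dπ s * π s a ∧ dπ s * π s a ≤ pub s a)
    (vStar : S → ℝ) (qStar rlbStar rubStar : S → A → ℝ)
    (hFeas : (∀ s, ∑ a, π s a * qStar s a ≤ vStar s) ∧
      (∀ s a, qStar s a = ∑ s', τ s a s' *
        (r s a s' + rlbStar s a - rubStar s a + γ * vStar s')) ∧
      (∀ s a, 0 ≤ rlbStar s a) ∧ ∀ s a, 0 ≤ rubStar s a)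
    (hOpt : ∀ (v : S → ℝ) (q rlb rub : S → A → ℝ),
      ((∀ s, ∑ a, π s a * q s a ≤ v s) ∧
        (∀ s a, q s a = ∑ s', τ s a s' *
          (r s a s' + rlb s a - rub s a + γ * v s')) ∧
        (∀ s a, 0 ≤ rlb s a) ∧ ∀ s a, 0 ≤ rub s a) →
      (∑ s, ι s * ((1 - γ) * vStar s)) - (∑ s, ∑ a, rlbStar s a * plb s a) +
          (∑ s, ∑ a, rubStar s a * pub s a) ≤
        (∑ s, ι s * ((1 - γ) * v s)) - (∑ s, ∑ a, rlb s a * plb s a) +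
          (∑ s, ∑ a, rub s a * pub s a)) :
    (∀ s, vStar s = ∑ a, π s a * ∑ s', τ s a s' *
      (r s a s' + rlbStar s a - rubStar s a + γ * vStar s')) ∧
    (∀ s a, qStar s a = ∑ s', τ s a s' *
      (r s a s' + rlbStar s a - rubStar s a + γ * vStar s')) ∧
    (∀ v : S → ℝ,
      (∀ s, v s = ∑ a, π s a * ∑ s', τ s a s' *
        (r s a s' + rlbStar s a - rubStar s a + γ * v s')) → v = vStar) := by
  classical
  obtain ⟨hι, hιs, hτ0, hτ1, hγ0, hγ1⟩ := hMDP
  obtain ⟨hπ0, hπ1⟩ := hPol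
  obtain ⟨hF1, hF2, hF3, hF4⟩ := hFeas
  -- Tightness of the first constraint at the optimum
  have tight : ∀ s, vStar s = ∑ a, π s a * qStar s a := by
    intro s0
    by_contra hne
    have hlt : ∑ a, π s0 a * qStar s0 a < vStar s0 :=
      lt_of_le_of_ne (hF1 s0) (fun h => hne h.symm)
    set δ : ℝ := vStar s0 - ∑ a, π s0 a * qStar s0 a with hδ
    have hδpos : 0 < δ := by simp only [hδ]; linarith
    set v' : S → ℝ := fun t => if t = s0 then vStar t - δ else vStar t with hv'
    set q' : S → A → ℝ := fun s a =>
      ∑ s', τ s a s' * (r s a s' + rlbStar s a - rubStar s a + γ * v' s') with hq'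
    have hdiff : ∀ s', v' s' - vStar s' = if s' = s0 then -δ else 0 := by
      intro s'; simp only [hv']; split <;> ring
    have hq'eq : ∀ s a, q' s a = qStar s a - γ * τ s a s0 * δ := by
      intro s a
      have h1 : q' s a = qStar s a + ∑ s', τ s a s' * γ * (v' s' - vStar s') := by
        rw [hF2 s a]; simp only [hq']
        rw [← Finset.sum_add_distrib]
        refine Finset.sum_congr rfl fun s' _ => by ring
      rw [h1]
      have h2 : ∀ s', τ s a s' * γ * (v' s' - vStar s')
          = if s' = s0 then τ s a s' * γ * (-δ) else 0 := by
        intro s'; rw [hdiff s']; split <;> ring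
      rw [Finset.sum_congr rfl fun s' _ => h2 s', Finset.sum_ite_eq' Finset.univ s0]
      simp; ring
    have hcnn : ∀ s, 0 ≤ ∑ a, π s a * τ s a s0 := fun s =>
      Finset.sum_nonneg fun a _ => mul_nonneg (hπ0 s a) (hτ0 s a s0)
    have hfeas' : (∀ s, ∑ a, π s a * q' s a ≤ v' s) ∧
        (∀ s a, q' s a = ∑ s', τ s a s' *
          (r s a s' + rlbStar s a - rubStar s a + γ * v' s')) ∧
        (∀ s a, 0 ≤ rlbStar s a) ∧ ∀ s a, 0 ≤ rubStar s a := by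
      refine ⟨?_, fun s a => rfl, hF3, hF4⟩
      intro s
      have hsum : ∑ a, π s a * q' s a
          = (∑ a, π s a * qStar s a) - γ * δ * ∑ a, π s a * τ s a s0 := by
        rw [Finset.mul_sum, ← Finset.sum_sub_distrib]
        refine Finset.sum_congr rfl fun a _ => by rw [hq'eq s a]; ring
      rw [hsum]
      have hnn : 0 ≤ γ * δ * ∑ a, π s a * τ s a s0 :=
        mul_nonneg (mul_nonneg hγ0 hδpos.le) (hcnn s)
      by_cases h : s = s0
      · subst h
        have : v' s = vStar s - δ := by simp [hv']
        rw [this]; linarith [hδ]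
      · have : v' s = vStar s := by simp [hv', h]
        rw [this]; linarith [hF1 s]
    have hobj := hOpt v' q' rlbStar rubStar hfeas'
    have hveq : ∑ s, ι s * ((1 - γ) * v' s)
        = (∑ s, ι s * ((1 - γ) * vStar s)) - ι s0 * ((1 - γ) * δ) := by
      have h1 : ∑ s, ι s * ((1 - γ) * v' s)
          = (∑ s, ι s * ((1 - γ) * vStar s)) + ∑ s, ι s * ((1 - γ) * (v' s - vStar s)) := by
        rw [← Finset.sum_add_distrib]
        refine Finset.sum_congr rfl fun s _ => by ring
      have h2 : ∀ s, ι s * ((1 - γ) * (v' s - vStar s))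
          = if s = s0 then ι s * ((1 - γ) * (-δ)) else 0 := by
        intro s; rw [hdiff s]; split <;> ring
      rw [h1, Finset.sum_congr rfl fun s _ => h2 s, Finset.sum_ite_eq' Finset.univ s0]
      simp; ring
    rw [hveq] at hobj
    have hpos : 0 < ι s0 * ((1 - γ) * δ) :=
      mul_pos (hι s0) (mul_pos (by linarith) hδpos)
    linarith
  have hBell : ∀ s, vStar s = ∑ a, π s a * ∑ s', τ s a s' *
      (r s a s' + rlbStar s a - rubStar s a + γ * vStar s') := by
    intro s; rw [tight s]
    exact Finset.sum_congr rfl fun a _ => by rw [hF2 s a]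
  refine ⟨hBell, hF2, ?_⟩
  -- Uniqueness via the contraction property
  intro v hv
  have key : ∀ s, v s - vStar s
      = ∑ a, π s a * ∑ s', τ s a s' * (γ * (v s' - vStar s')) := by
    intro s
    rw [hv s, hBell s, ← Finset.sum_sub_distrib]
    refine Finset.sum_congr rfl fun a _ => ?_
    rw [← mul_sub, ← Finset.sum_sub_distrib]
    congr 1
    refine Finset.sum_congr rfl fun s' _ => by ring
  obtain ⟨s0, -, hs0⟩ := Finset.exists_max_image Finset.univ (fun s => |v s - vStar s|)
    ⟨Classical.arbitrary S, Finset.mem_univ _⟩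
  set M : ℝ := |v s0 - vStar s0| with hM
  have hM0 : 0 ≤ M := abs_nonneg _
  have hMle : M ≤ γ * M := by
    calc M = |∑ a, π s0 a * ∑ s', τ s0 a s' * (γ * (v s' - vStar s'))| := by
            rw [hM, key s0]
      _ ≤ ∑ a, |π s0 a * ∑ s', τ s0 a s' * (γ * (v s' - vStar s'))| :=
            Finset.abs_sum_le_sum_abs _ _
      _ ≤ ∑ a, π s0 a * (γ * M) := by
            refine Finset.sum_le_sum fun a _ => ?_
            rw [abs_mul, abs_of_nonneg (hπ0 s0 a)]
            refine mul_le_mul_of_nonneg_left ?_ (hπ0 s0 a)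
            calc |∑ s', τ s0 a s' * (γ * (v s' - vStar s'))|
                ≤ ∑ s', |τ s0 a s' * (γ * (v s' - vStar s'))| :=
                  Finset.abs_sum_le_sum_abs _ _
              _ ≤ ∑ s', τ s0 a s' * (γ * M) := by
                  refine Finset.sum_le_sum fun s' _ => ?_
                  rw [abs_mul, abs_of_nonneg (hτ0 s0 a s'), abs_mul,
                    abs_of_nonneg hγ0]
                  exact mul_le_mul_of_nonneg_left
                    (mul_le_mul_of_nonneg_left (hs0 s' (Finset.mem_univ s')) hγ0)
                    (hτ0 s0 a s')
              _ = γ * M := by rw [← Finset.sum_mul, hτ1 s0 a, one_mul]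
      _ = γ * M := by rw [← Finset.sum_mul, hπ1 s0, one_mul]
  have hMz : M = 0 := by nlinarith
  funext s
  have := hs0 s (Finset.mem_univ s)
  have : |v s - vStar s| ≤ 0 := by rw [← hMz]; exact this
  have := abs_nonpos_iff.mp this
  linarith [sub_eq_zero.mp this]
end

section
/- Assume the action-density-bounded dual LP is feasible, and let (v*, q*, r_lb*, r_ub*) be an optimal solution of the action-density-bounded primal LP. Then v* and q* satisfy the Bellman optimality equations for the modified reward r*_ADB(s,a,s') = r(s,a,s') + r_lb*(s,a) − Σ_{ã} r_lb*(s,ã) π_lb(ã|s) − r_ub*(s,a) + Σ_{ã} r_ub*(s,ã) π_ub(ã|s): v*(s) = max_a Σ_{s'} τ(s'|s,a)(r*_ADB(s,a,s') + γ v*(s')) for all s and q*(s,a) = Σ_{s'} τ(s'|s,a)(r*_ADB(s,a,s') + γ v*(s')) for all s,a; hence v* and q* are the optimal value functions of the MDP with reward r*_ADB. -/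
open Finset

private lemma bellman_aux
    {S A : Type*} [Fintype S] [Fintype A] [Nonempty S] [Nonempty A]
    (ι : S → ℝ) (τ : S → A → S → ℝ) (γ : ℝ) (c : S → A → S → ℝ)
    (hι : ∀ s, 0 < ι s) (hτ0 : ∀ s a s', 0 ≤ τ s a s')
    (hτ1 : ∀ s a, ∑ s', τ s a s' = 1) (hγ0 : 0 ≤ γ) (hγ1 : γ < 1)
    (vStar : S → ℝ) (qStar : S → A → ℝ)
    (hle : ∀ s a, qStar s a ≤ vStar s)
    (hq : ∀ s a, qStar s a = ∑ s', τ s a s' * (c s a s' + γ * vStar s'))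
    (hOpt : ∀ v : S → ℝ,
      (∀ s a, (∑ s', τ s a s' * (c s a s' + γ * v s')) ≤ v s) →
      ∑ s, ι s * ((1 - γ) * vStar s) ≤ ∑ s, ι s * ((1 - γ) * v s)) :
    (∀ s, vStar s = ⨆ a, ∑ s', τ s a s' * (c s a s' + γ * vStar s')) ∧
    (∀ v : S → ℝ,
      (∀ s, v s = ⨆ a, ∑ s', τ s a s' * (c s a s' + γ * v s')) → v = vStar) := by
  classical
  -- monotonicity of Bellman backup in v
  have hmono : ∀ (v w : S → ℝ), (∀ s, v s ≤ w s) → ∀ s a,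
      (∑ s', τ s a s' * (c s a s' + γ * v s')) ≤
      ∑ s', τ s a s' * (c s a s' + γ * w s') := by
    intro v w hvw s a
    refine Finset.sum_le_sum fun s' _ => ?_
    have h := mul_nonneg (mul_nonneg (hτ0 s a s') hγ0) (sub_nonneg.mpr (hvw s'))
    nlinarith [h]
  have hMle : ∀ s, (⨆ a, qStar s a) ≤ vStar s := fun s => ciSup_le fun a => hle s a
  have hvleM : ∀ s, vStar s ≤ ⨆ a, qStar s a := by
    by_contra h
    push_neg at h
    obtain ⟨s0, hs0⟩ := h
    have hv'le : ∀ s, (if s = s0 then ⨆ a, qStar s0 a else vStar s) ≤ vStar s := by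
      intro s
      by_cases hs : s = s0
      · subst hs; simp only [if_pos rfl]; exact hs0.le
      · simp [hs]
    have hfeas : ∀ s a,
        (∑ s', τ s a s' * (c s a s' + γ *
          (if s' = s0 then ⨆ a, qStar s0 a else vStar s'))) ≤
        (if s = s0 then ⨆ a, qStar s0 a else vStar s) := by
      intro s a
      have h1 : (∑ s', τ s a s' * (c s a s' + γ *
          (if s' = s0 then ⨆ a, qStar s0 a else vStar s'))) ≤ qStar s a := by
        rw [hq s a]; exact hmono _ vStar hv'le s a
      by_cases hs : s = s0
      · subst hs
        simp only [if_pos rfl]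
        exact h1.trans (le_ciSup (Set.finite_range _).bddAbove a)
      · simp only [if_neg hs]
        exact h1.trans (hle s a)
    have hopt := hOpt _ hfeas
    have hlt : (∑ s, ι s * ((1 - γ) *
        (if s = s0 then ⨆ a, qStar s0 a else vStar s))) <
        ∑ s, ι s * ((1 - γ) * vStar s) := by
      refine Finset.sum_lt_sum (fun s _ => ?_) ⟨s0, Finset.mem_univ s0, ?_⟩
      · exact mul_le_mul_of_nonneg_left
          (mul_le_mul_of_nonneg_left (hv'le s) (by linarith)) (hι s).le
      · simp only [if_pos rfl]
        exact mul_lt_mul_of_pos_left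
          (mul_lt_mul_of_pos_left hs0 (by linarith)) (hι s0)
    linarith
  have hBell : ∀ s, vStar s = ⨆ a, ∑ s', τ s a s' * (c s a s' + γ * vStar s') := by
    intro s
    have heq : (⨆ a, ∑ s', τ s a s' * (c s a s' + γ * vStar s')) = ⨆ a, qStar s a := by
      congr 1; funext a; rw [hq s a]
    rw [heq]
    exact le_antisymm (hvleM s) (hMle s)
  refine ⟨hBell, ?_⟩
  intro v hv
  -- contraction argument
  have hCge : ∀ s, |v s - vStar s| ≤ ⨆ s, |v s - vStar s| :=
    fun s => le_ciSup (f := fun s => |v s - vStar s|) (Set.finite_range _).bddAbove s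
  have hC0 : 0 ≤ ⨆ s, |v s - vStar s| :=
    le_trans (abs_nonneg _) (hCge (Classical.arbitrary S))
  have hdiff : ∀ s a,
      |(∑ s', τ s a s' * (c s a s' + γ * v s')) -
        ∑ s', τ s a s' * (c s a s' + γ * vStar s')| ≤ γ * ⨆ s, |v s - vStar s| := by
    intro s a
    have heq : (∑ s', τ s a s' * (c s a s' + γ * v s')) -
        (∑ s', τ s a s' * (c s a s' + γ * vStar s')) =
        ∑ s', τ s a s' * (γ * (v s' - vStar s')) := by
      rw [← Finset.sum_sub_distrib]
      exact Finset.sum_congr rfl fun s' _ => by ring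
    rw [heq]
    calc |∑ s', τ s a s' * (γ * (v s' - vStar s'))|
        ≤ ∑ s', |τ s a s' * (γ * (v s' - vStar s'))| := Finset.abs_sum_le_sum_abs _ _
      _ ≤ ∑ s', τ s a s' * (γ * ⨆ s, |v s - vStar s|) := by
          refine Finset.sum_le_sum fun s' _ => ?_
          rw [abs_mul, abs_of_nonneg (hτ0 s a s'), abs_mul, abs_of_nonneg hγ0]
          exact mul_le_mul_of_nonneg_left
            (mul_le_mul_of_nonneg_left (hCge s') hγ0) (hτ0 s a s')
      _ = γ * ⨆ s, |v s - vStar s| := by rw [← Finset.sum_mul, hτ1 s a, one_mul]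
  have hsupdiff : ∀ s, |v s - vStar s| ≤ γ * ⨆ s, |v s - vStar s| := by
    intro s
    rw [hv s, hBell s, abs_sub_le_iff]
    constructor
    · have h : (⨆ a, ∑ s', τ s a s' * (c s a s' + γ * v s')) ≤
          (⨆ a, ∑ s', τ s a s' * (c s a s' + γ * vStar s')) +
            γ * ⨆ s, |v s - vStar s| := by
        refine ciSup_le fun a => ?_
        have h1 := abs_le.mp (hdiff s a)
        have h2 : (∑ s', τ s a s' * (c s a s' + γ * vStar s')) ≤
            ⨆ a, ∑ s', τ s a s' * (c s a s' + γ * vStar s') :=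
          le_ciSup (f := fun a => ∑ s', τ s a s' * (c s a s' + γ * vStar s'))
            (Set.finite_range _).bddAbove a
        linarith [h1.1, h1.2]
      linarith
    · have h : (⨆ a, ∑ s', τ s a s' * (c s a s' + γ * vStar s')) ≤
          (⨆ a, ∑ s', τ s a s' * (c s a s' + γ * v s')) +
            γ * ⨆ s, |v s - vStar s| := by
        refine ciSup_le fun a => ?_
        have h1 := abs_le.mp (hdiff s a)
        have h2 : (∑ s', τ s a s' * (c s a s' + γ * v s')) ≤
            ⨆ a, ∑ s', τ s a s' * (c s a s' + γ * v s') :=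
          le_ciSup (f := fun a => ∑ s', τ s a s' * (c s a s' + γ * v s'))
            (Set.finite_range _).bddAbove a
        linarith [h1.1, h1.2]
      linarith
  have hCle : (⨆ s, |v s - vStar s|) ≤ γ * ⨆ s, |v s - vStar s| := ciSup_le hsupdiff
  have hCzero : (⨆ s, |v s - vStar s|) = 0 := by nlinarith
  funext s
  have h := hCge s
  rw [hCzero] at h
  have h2 := abs_nonpos_iff.mp h
  linarith [sub_eq_zero.mp h2]

/-- if the action-density-bounded dual LP is feasible, an optimal solution
`(v*, q*, r_lb*, r_ub*)` of the action-density-bounded primal LP satisfies the Bellman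
optimality equations for the modified reward `r*_ADB`, hence equals the optimal value
functions of the MDP with reward `r*_ADB`. -/
theorem adb_primal_bellman_optimality
    {S A : Type*} [Fintype S] [Fintype A] [Nonempty S] [Nonempty A]
    (ι : S → ℝ) (τ : S → A → S → ℝ) (γ : ℝ) (r : S → A → S → ℝ)
    (hMDP : IsMDP ι τ γ)
    (πlb πub : S → A → ℝ) (hlb0 : ∀ s a, 0 ≤ πlb s a)
    (hlb1 : ∀ s, ∑ a, πlb s a ≤ 1) (hub1 : ∀ s, 1 ≤ ∑ a, πub s a)
    (hDualFeas : ∃ (d : S → ℝ) (p : S → A → ℝ), DualFeas ι τ γ d p ∧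
      ∀ s a, d s * πlb s a ≤ p s a ∧ p s a ≤ d s * πub s a)
    (vStar : S → ℝ) (qStar rlbStar rubStar : S → A → ℝ)
    (hFeas : (∀ s a, qStar s a ≤ vStar s) ∧
      (∀ s a, qStar s a = ∑ s', τ s a s' *
        (r s a s' + rlbStar s a - (∑ b, rlbStar s b * πlb s b) -
          rubStar s a + (∑ b, rubStar s b * πub s b) + γ * vStar s')) ∧
      (∀ s a, 0 ≤ rlbStar s a) ∧ ∀ s a, 0 ≤ rubStar s a)
    (hOpt : ∀ (v : S → ℝ) (q rlb rub : S → A → ℝ),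
      ((∀ s a, q s a ≤ v s) ∧
        (∀ s a, q s a = ∑ s', τ s a s' *
          (r s a s' + rlb s a - (∑ b, rlb s b * πlb s b) -
            rub s a + (∑ b, rub s b * πub s b) + γ * v s')) ∧
        (∀ s a, 0 ≤ rlb s a) ∧ ∀ s a, 0 ≤ rub s a) →
      ∑ s, ι s * ((1 - γ) * vStar s) ≤ ∑ s, ι s * ((1 - γ) * v s)) :
    (∀ s, vStar s = ⨆ a, ∑ s', τ s a s' *
      (r s a s' + rlbStar s a - (∑ b, rlbStar s b * πlb s b) -
        rubStar s a + (∑ b, rubStar s b * πub s b) + γ * vStar s')) ∧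
    (∀ s a, qStar s a = ∑ s', τ s a s' *
      (r s a s' + rlbStar s a - (∑ b, rlbStar s b * πlb s b) -
        rubStar s a + (∑ b, rubStar s b * πub s b) + γ * vStar s')) ∧
    (∀ v : S → ℝ,
      (∀ s, v s = ⨆ a, ∑ s', τ s a s' *
        (r s a s' + rlbStar s a - (∑ b, rlbStar s b * πlb s b) -
          rubStar s a + (∑ b, rubStar s b * πub s b) + γ * v s')) → v = vStar) := by
  obtain ⟨hι, -, hτ0, hτ1, hγ0, hγ1⟩ := hMDP
  obtain ⟨hle, hqdef, hrlb, hrub⟩ := hFeas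
  have key := bellman_aux ι τ γ
    (fun s a s' => r s a s' + rlbStar s a - (∑ b, rlbStar s b * πlb s b) -
      rubStar s a + (∑ b, rubStar s b * πub s b))
    hι hτ0 hτ1 hγ0 hγ1 vStar qStar hle hqdef
    (fun v hffeas => hOpt v
      (fun s a => ∑ s', τ s a s' *
        (r s a s' + rlbStar s a - (∑ b, rlbStar s b * πlb s b) -
          rubStar s a + (∑ b, rubStar s b * πub s b) + γ * v s'))
      rlbStar rubStar ⟨hffeas, fun _ _ => rfl, hrlb, hrub⟩)
  exact ⟨key.1, hqdef, key.2⟩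
end
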